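/- arXiv:1107.1871 — 3 statements merged into one kernel-verified Lean document; each statement's English description precedes it below -/
import Mathlib

section
/- Let d ≥ 2 be an integer and ζ = exp(2πi/d). Let f, g ∈ ℚ[q] each be a product of a positive rational constant, a power of q, and cyclotomic polynomials, with Φ_d dividing neither f nor g. If f(ζ)/g(ζ) is a real number, then (B_d(f) − B_d(g))/d is an integer; moreover this integer is even if f(ζ)/g(ζ) > 0 and odd if f(ζ)/g(ζ) < 0. -/
open Polynomial

/-- `φ_d(r)`: for `r = 1` it is `1/2`; for `r ≥ 2` it is the number of integers `j` with
`1 ≤ j ≤ r / d` that are coprime to `r`. -/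
noncomputable def phiD (d r : ℕ) : ℚ :=
  if r = 1 then 1 / 2
  else (((Finset.Icc 1 (r / d)).filter fun j => Nat.gcd j r = 1).card : ℚ)

/-- `B_d(f)` for `f` a rational constant times a power of `q` times a product of cyclotomic
polynomials: if `f = c·q^a·∏_{r≥1} Φ_r^{m_r}`, then `B_d(f) = 2a + Σ_r m_r·(φ(r) + d·φ_d(r))`.
The exponents are recovered as multiplicities; since `Φ_r ∣ f` forces
`φ(r) ≤ deg f` and `r ≤ 2·φ(r)²`, the sum below captures every relevant `r`. -/
noncomputable def Bd (d : ℕ) (f : Polynomial ℚ) : ℚ :=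
  2 * (multiplicity X f : ℚ) +
    ∑ r ∈ Finset.Icc 1 (2 * f.natDegree ^ 2 + 1),
      (multiplicity (cyclotomic r ℚ) f : ℚ) * ((Nat.totient r : ℚ) + d * phiD d r)

/-- `f` is a product of a positive rational constant, a power of `q`, and
cyclotomic polynomials. -/
def IsPosCycProduct (f : Polynomial ℚ) : Prop :=
  ∃ (c : ℚ) (a : ℕ) (L : Multiset ℕ), 0 < c ∧ (∀ r ∈ L, 0 < r) ∧
    f = C c * X ^ a * (L.map fun r => cyclotomic r ℚ).prod

/-!
Measure arguments of complex numbers in half-turns. For `ζ = exp(2πi/d)` and a primitive `r`-th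
root of unity `ξ = exp(2πij/r)`, the chord `ζ - ξ` has argument `1/d + j/r + 1/2`, plus `1`
exactly when `ξ` lies beyond `ζ` on the circle, i.e. when `r < jd`. Summing over the `φ(r)`
primitive roots, whose exponents average `j/r = 1/2` by the symmetry `j ↦ r - j` when `r ≥ 2`
(for `r = 1` the convention `φ_d(1) = 1/2` takes its place), the argument of `Φ_r(ζ)` is
`(φ(r) + d·φ_d(r))/d` modulo `2`. Hence `f(ζ)` has argument `B_d(f)/d`, and
`f(ζ)/g(ζ)` has argument `(B_d(f) - B_d(g))/d`; a nonzero real number has integer argument,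
even exactly when it is positive.
-/

open Complex Finset UniqueFactorizationMonoid
open scoped Real

lemma Nat.prime_pow_le_totient_sq {p k : ℕ} (hp : p.Prime) (hp2 : p ≠ 2) :
    p ^ k ≤ (p ^ k).totient ^ 2 := by
  cases k with
  | zero => simp
  | succ m =>
    have hp3 : 3 ≤ p := by have := hp.two_le; omega
    have hp1 : p ≤ (p - 1) ^ 2 := by
      obtain ⟨q, rfl⟩ : ∃ q, p = q + 1 := ⟨p - 1, by omega⟩
      simp only [add_tsub_cancel_right]
      nlinarith
    have hpm : 1 ≤ p ^ m := Nat.one_le_pow _ _ hp.pos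
    rw [Nat.totient_prime_pow_succ hp]
    calc p ^ (m + 1) = p ^ m * p := pow_succ p m
      _ ≤ p ^ m * (p ^ m * (p - 1) ^ 2) :=
        Nat.mul_le_mul_left _ (hp1.trans (Nat.le_mul_of_pos_left _ hpm))
      _ = (p ^ m * (p - 1)) ^ 2 := by ring

lemma Nat.le_totient_sq_of_odd {n : ℕ} (hn : Odd n) : n ≤ n.totient ^ 2 := by
  induction n using Nat.recOnPrimePow with
  | zero => simp
  | one => simp
  | prime_pow_mul a p k hp hpa hk ih =>
    have hp2 : p ≠ 2 := by
      rintro rfl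
      exact (Nat.not_even_iff_odd.2 hn) ((Nat.even_pow.2 ⟨even_two, hk.ne'⟩).mul_right a)
    rw [Nat.totient_mul (Nat.Coprime.pow_left k (hp.coprime_iff_not_dvd.2 hpa)), mul_pow]
    exact Nat.mul_le_mul (Nat.prime_pow_le_totient_sq hp hp2) (ih (Nat.Odd.of_mul_right hn))

lemma Nat.le_two_mul_totient_sq (n : ℕ) : n ≤ 2 * n.totient ^ 2 := by
  rcases eq_or_ne n 0 with rfl | hn
  · simp
  obtain ⟨k, m, hm, rfl⟩ := Nat.exists_eq_two_pow_mul_odd hn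
  have h2k : 2 ^ k ≤ 2 * (2 ^ k).totient ^ 2 := by
    cases k with
    | zero => simp
    | succ j =>
      rw [Nat.totient_prime_pow_succ Nat.prime_two, pow_succ, Nat.add_one_sub_one, mul_one]
      nlinarith [Nat.one_le_two_pow (n := j)]
  rw [Nat.totient_mul (hm.coprime_two_left.pow_left k), mul_pow, ← mul_assoc]
  exact Nat.mul_le_mul h2k (Nat.le_totient_sq_of_odd hm)

lemma IsPrimitiveRoot.primitiveRoots_eq_image {K : Type*} [CommRing K] [IsDomain K]
    [DecidableEq K] {ζ : K} {r : ℕ} [NeZero r] (h : IsPrimitiveRoot ζ r) :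
    primitiveRoots r K = {j ∈ range r | r.Coprime j}.image (ζ ^ ·) := by
  ext μ
  simp only [mem_primitiveRoots (NeZero.pos r), h.isPrimitiveRoot_iff, mem_image, mem_filter,
    mem_range, Nat.coprime_comm (m := r), and_assoc]

lemma IsPrimitiveRoot.eval_cyclotomic_eq_prod {K : Type*} [CommRing K] [IsDomain K] {ζ : K}
    {r : ℕ} [NeZero r] (h : IsPrimitiveRoot ζ r) (z : K) :
    (cyclotomic r K).eval z = ∏ j ∈ range r with r.Coprime j, (z - ζ ^ j) := by
  classical
  rw [cyclotomic_eq_prod_X_sub_primitiveRoots h, eval_prod, h.primitiveRoots_eq_image,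
    prod_image fun i hi j hj => h.pow_inj (by simp_all) (by simp_all)]
  simp only [eval_sub, eval_X, eval_C]

lemma Nat.two_mul_sum_coprime_range {r : ℕ} (hr : 1 < r) :
    2 * ∑ j ∈ range r with r.Coprime j, j = r * r.totient := by
  have hmem : ∀ j ∈ {j ∈ range r | r.Coprime j},
      0 < j ∧ j < r ∧ r - j ∈ {j ∈ range r | r.Coprime j} := by
    intro j hj
    simp only [mem_filter, mem_range] at hj ⊢
    have hj0 : 0 < j := Nat.pos_of_ne_zero fun h0 => by simp [h0] at hj; omega
    exact ⟨hj0, hj.1, by omega, (Nat.coprime_self_sub_right hj.1.le).2 hj.2⟩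
  have hreflect :
      ∑ j ∈ range r with r.Coprime j, (r - j) = ∑ j ∈ range r with r.Coprime j, j :=
    sum_nbij' (r - ·) (r - ·) (fun j hj => (hmem j hj).2.2) (fun j hj => (hmem j hj).2.2)
      (fun j hj => by have := hmem j hj; omega)
      (fun j hj => by have := hmem j hj; omega) fun _ _ => rfl
  have hpair : ∑ j ∈ range r with r.Coprime j, (j + (r - j)) = r * r.totient := by
    rw [sum_congr rfl fun j hj => Nat.add_sub_cancel' (hmem j hj).2.1.le, sum_const,
      smul_eq_mul, mul_comm, Nat.totient]
  rw [sum_add_distrib, hreflect] at hpair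
  omega

lemma cyclotomic_ne_X {R : Type*} [CommRing R] [IsDomain R] [CharZero R] {r : ℕ} (hr : r ≠ 0) :
    cyclotomic r R ≠ X := by
  intro h
  have : NeZero (r : R) := ⟨Nat.cast_ne_zero.2 hr⟩
  have h0 : (cyclotomic r R).IsRoot 0 := by simp [h]
  exact (isRoot_cyclotomic_iff.1 h0).ne_zero hr rfl

/-- `z` lies on the open ray through `exp (π t i)`; angles are measured in half-turns. -/
def OnRay (z : ℂ) (t : ℝ) : Prop :=
  ∃ ρ : ℝ, 0 < ρ ∧ z = ρ * exp (π * t * I)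

lemma onRay_exp (t : ℝ) : OnRay (exp (π * t * I)) t :=
  ⟨1, one_pos, by simp⟩

lemma onRay_ofReal {ρ : ℝ} (hρ : 0 < ρ) : OnRay ρ 0 :=
  ⟨ρ, hρ, by simp⟩

namespace OnRay

variable {z w : ℂ} {s t : ℝ}

lemma mul (hz : OnRay z s) (hw : OnRay w t) : OnRay (z * w) (s + t) := by
  obtain ⟨ρ, hρ, rfl⟩ := hz
  obtain ⟨σ, hσ, rfl⟩ := hw
  refine ⟨ρ * σ, mul_pos hρ hσ, ?_⟩
  push_cast
  rw [mul_add, add_mul, Complex.exp_add]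
  ring

lemma inv (hz : OnRay z t) : OnRay z⁻¹ (-t) := by
  obtain ⟨ρ, hρ, rfl⟩ := hz
  refine ⟨ρ⁻¹, inv_pos.2 hρ, ?_⟩
  push_cast
  rw [mul_inv, ← Complex.exp_neg]
  ring_nf

lemma div (hz : OnRay z s) (hw : OnRay w t) : OnRay (z / w) (s - t) := by
  simpa [div_eq_mul_inv, sub_eq_add_neg] using hz.mul hw.inv

lemma neg (hz : OnRay z t) : OnRay (-z) (t + 1) := by
  have h := hz.mul (onRay_exp 1)
  rwa [Complex.ofReal_one, mul_one, Complex.exp_pi_mul_I, mul_neg_one] at h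

lemma multiset_prod {ι : Type*} (L : Multiset ι) {z : ι → ℂ} {t : ι → ℝ}
    (h : ∀ i ∈ L, OnRay (z i) (t i)) : OnRay (L.map z).prod (L.map t).sum := by
  induction L using Multiset.induction with
  | empty => simpa using onRay_ofReal one_pos
  | cons i L ih =>
    simp only [Multiset.map_cons, Multiset.prod_cons, Multiset.sum_cons]
    exact (h i (L.mem_cons_self i)).mul (ih fun j hj => h j (Multiset.mem_cons_of_mem hj))

lemma finset_prod {ι : Type*} (S : Finset ι) {z : ι → ℂ} {t : ι → ℝ}
    (h : ∀ i ∈ S, OnRay (z i) (t i)) : OnRay (∏ i ∈ S, z i) (∑ i ∈ S, t i) :=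
  multiset_prod S.val h

lemma pow (hz : OnRay z t) (n : ℕ) : OnRay (z ^ n) (n * t) := by
  simpa using multiset_prod (Multiset.replicate n ()) fun _ _ => hz

lemma add_two_mul_int_iff (k : ℤ) : OnRay z (t + 2 * k) ↔ OnRay z t := by
  have hk : exp (π * ↑(t + 2 * k) * I) = exp (π * t * I) := by
    rw [← mul_one (exp (π * t * I)), ← Complex.exp_int_mul_two_pi_mul_I k, ← Complex.exp_add]
    push_cast
    ring_nf
  simp only [OnRay, hk]

lemma exists_int_of_im_eq_zero (hz : OnRay z t) (him : z.im = 0) :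
    ∃ n : ℤ, t = n ∧ (0 < z.re → Even n) ∧ (z.re < 0 → Odd n) := by
  obtain ⟨ρ, hρ, rfl⟩ := hz
  have hexp : exp (π * t * I) = exp ((π * t : ℝ) * I) := by push_cast; rfl
  simp only [hexp, re_ofReal_mul, im_ofReal_mul, exp_ofReal_mul_I_re, exp_ofReal_mul_I_im,
    mul_eq_zero, hρ.ne', false_or] at him ⊢
  obtain ⟨n, hn⟩ := Real.sin_eq_zero_iff.1 him
  have ht : t = n := by nlinarith [Real.pi_pos]
  have hcos : Real.cos (π * t) = (-1) ^ n := by rw [← Real.cos_int_mul_pi, hn]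
  rcases n.even_or_odd with he | ho
  · refine ⟨n, ht, fun _ => he, fun hneg => ?_⟩
    rw [hcos, he.neg_one_zpow] at hneg
    linarith
  · refine ⟨n, ht, fun hpos => ?_, fun _ => ho⟩
    rw [hcos, ho.neg_one_zpow] at hpos
    linarith

end OnRay

lemma exp_sub_exp_eq (a b : ℝ) :
    exp (π * a * I) - exp (π * b * I)
      = (2 * Real.sin (π * (a - b) / 2) : ℝ) * exp (π * ((a + b) / 2 + 1 / 2 : ℝ) * I) := by
  set u : ℝ := π * (a + b) / 2
  set v : ℝ := π * (a - b) / 2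
  have hsin : ((2 * Real.sin v : ℝ) : ℂ) * I = exp (v * I) - exp (-v * I) := by
    rw [Complex.ofReal_mul, Complex.ofReal_sin, Complex.sin]
    push_cast
    linear_combination (exp (-v * I) - exp (v * I)) * Complex.I_sq
  have ha : exp (π * a * I) = exp (u * I) * exp (v * I) := by
    rw [← Complex.exp_add]; congr 1; simp only [u, v]; push_cast; ring
  have hb : exp (π * b * I) = exp (u * I) * exp (-v * I) := by
    rw [← Complex.exp_add]; congr 1; simp only [u, v]; push_cast; ring
  have hab : exp (π * ((a + b) / 2 + 1 / 2 : ℝ) * I) = exp (u * I) * exp (π / 2 * I) := by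
    rw [← Complex.exp_add]; congr 1; simp only [u]; push_cast; ring
  rw [ha, hb, hab, Complex.exp_pi_div_two_mul_I]
  linear_combination -exp (u * I) * hsin

lemma onRay_exp_sub_exp_of_lt {a b : ℝ} (hba : b < a) (hab : a < b + 2) :
    OnRay (exp (π * a * I) - exp (π * b * I)) ((a + b) / 2 + 1 / 2) := by
  refine ⟨_, ?_, exp_sub_exp_eq a b⟩
  have := Real.sin_pos_of_pos_of_lt_pi (x := π * (a - b) / 2) (by nlinarith [Real.pi_pos])
    (by nlinarith [Real.pi_pos])
  linarith

lemma onRay_exp_sub_exp_of_gt {a b : ℝ} (hab : a < b) (hba : b < a + 2) :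
    OnRay (exp (π * a * I) - exp (π * b * I)) ((a + b) / 2 + 3 / 2) := by
  convert (onRay_exp_sub_exp_of_lt hab hba).neg using 1 <;> ring

lemma phiD_eq_card {d r : ℕ} (hd : 0 < d) (hr : 1 < r) :
    phiD d r = #{j ∈ range r | r.Coprime j ∧ j * d ≤ r} := by
  rw [phiD, if_neg hr.ne']
  congr 2
  ext j
  simp only [mem_filter, mem_Icc, mem_range, Nat.le_div_iff_mul_le hd, Nat.coprime_comm (n := r),
    Nat.Coprime]
  constructor
  · rintro ⟨⟨hj, hjd⟩, hcop⟩
    have hjr : j ≠ r := fun h => by simp [h] at hcop; omega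
    exact ⟨by have := Nat.le_mul_of_pos_right j hd; omega, hcop, hjd⟩
  · rintro ⟨-, hcop, hjd⟩
    have hj : j ≠ 0 := fun h => by simp [h] at hcop; omega
    exact ⟨⟨by omega, hjd⟩, hcop⟩

lemma exists_sum_chord_args_eq {d r : ℕ} (hd : 0 < d) (hr : 0 < r) :
    ∃ k : ℤ, ∑ j ∈ range r with r.Coprime j,
        (1 / d + j / r + 1 / 2 + if r < j * d then 1 else 0 : ℝ)
      = (r.totient + d * phiD d r) / d + 2 * k := by
  have hd' : (d : ℝ) ≠ 0 := by positivity
  obtain rfl | hr : r = 1 ∨ 1 < r := by omega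
  · refine ⟨0, ?_⟩
    simp [phiD, field]
  have hsum : ∑ j ∈ range r with r.Coprime j, (j : ℝ) = r * r.totient / 2 := by
    have h := congrArg (Nat.cast : ℕ → ℝ) (Nat.two_mul_sum_coprime_range hr)
    push_cast at h
    linarith
  have hsplit := card_filter_add_card_filter_not (s := {j ∈ range r | r.Coprime j})
    (fun j => r < j * d)
  simp only [filter_filter, not_lt, ← Nat.totient_eq_card_coprime] at hsplit
  have hphiD : (phiD d r : ℝ) = r.totient - #{j ∈ range r | r.Coprime j ∧ r < j * d} := by
    rw [phiD_eq_card hd hr, ← hsplit]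
    push_cast
    ring
  refine ⟨#{j ∈ range r | r.Coprime j ∧ r < j * d}, ?_⟩
  simp only [sum_add_distrib, sum_boole, sum_const, ← sum_div, filter_filter, nsmul_eq_mul,
    ← Nat.totient_eq_card_coprime, hsum, hphiD, Int.cast_natCast]
  generalize #{j ∈ range r | r.Coprime j ∧ r < j * d} = A
  field_simp
  ring

lemma onRay_exp_sub_exp_pow {d r j : ℕ} (hd : 2 ≤ d) (hjr : j < r) (hjd : j * d ≠ r) :
    OnRay (exp (2 * π * I / d) - exp (2 * π * I / r) ^ j)
      (1 / d + j / r + 1 / 2 + if r < j * d then 1 else 0) := by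
  have hr : (0 : ℝ) < r := by exact_mod_cast (by omega : 0 < r)
  have hd0 : (0 : ℝ) < d := by positivity
  have hd1 : (2 : ℝ) / d ≤ 1 := by rw [div_le_one hd0]; exact_mod_cast hd
  have hjr' : (2 : ℝ) * j / r < 2 := by rw [div_lt_iff₀ hr]; norm_cast; omega
  have hζd : exp (2 * π * I / d) = exp (π * (2 / d : ℝ) * I) := by congr 1; push_cast; ring
  have hζr : exp (2 * π * I / r) ^ j = exp (π * (2 * j / r : ℝ) * I) := by
    rw [← exp_nat_mul]; congr 1; push_cast; ring
  rw [hζd, hζr]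
  rcases hjd.lt_or_gt with hlt | hgt
  · rw [if_neg (by omega)]
    convert onRay_exp_sub_exp_of_lt (a := 2 / d) (b := 2 * j / r) ?_ ?_ using 1
    · ring
    · have : (j : ℝ) * d < r := by exact_mod_cast hlt
      rw [div_lt_div_iff₀ hr hd0]; linarith
    · have : (0 : ℝ) ≤ 2 * j / r := by positivity
      linarith
  · rw [if_pos hgt]
    convert onRay_exp_sub_exp_of_gt (a := 2 / d) (b := 2 * j / r) ?_ ?_ using 1
    · ring
    · have : (r : ℝ) < j * d := by exact_mod_cast hgt
      rw [div_lt_div_iff₀ hd0 hr]; linarith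
    · have : (0 : ℝ) < 2 / d := by positivity
      linarith

lemma onRay_aeval_cyclotomic {d r : ℕ} (hd : 2 ≤ d) (hr : 0 < r) (hrd : r ≠ d) :
    OnRay (aeval (exp (2 * π * I / d)) (cyclotomic r ℚ)) ((r.totient + d * phiD d r) / d) := by
  have : NeZero r := ⟨hr.ne'⟩
  obtain ⟨k, hk⟩ := exists_sum_chord_args_eq (by omega : 0 < d) hr
  rw [← OnRay.add_two_mul_int_iff k, ← hk, aeval_def, eval₂_eq_eval_map, map_cyclotomic,
    (Complex.isPrimitiveRoot_exp r hr.ne').eval_cyclotomic_eq_prod]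
  refine OnRay.finset_prod _ fun j hj => onRay_exp_sub_exp_pow hd ?_ fun hjd => hrd ?_
  · exact (mem_range.1 (mem_filter.1 hj).1)
  · have hj1 : j = 1 := (mem_filter.1 hj).2.symm.eq_one_of_dvd ⟨d, hjd.symm⟩
    rw [← hjd, hj1, one_mul]

noncomputable def cycProd (c : ℚ) (a : ℕ) (L : Multiset ℕ) : ℚ[X] :=
  C c * X ^ a * (L.map fun r => cyclotomic r ℚ).prod

section cycProd

variable {c : ℚ} {a : ℕ} {L : Multiset ℕ}

lemma cycProd_ne_zero (hc : c ≠ 0) : cycProd c a L ≠ 0 :=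
  mul_ne_zero (mul_ne_zero (C_ne_zero.2 hc) (pow_ne_zero _ X_ne_zero))
    (Multiset.prod_ne_zero fun h => by
      obtain ⟨r, -, hr⟩ := Multiset.mem_map.1 h
      exact cyclotomic_ne_zero r ℚ hr)

lemma cyclotomic_dvd_cycProd {s : ℕ} (hs : s ∈ L) : cyclotomic s ℚ ∣ cycProd c a L :=
  dvd_mul_of_dvd_right (Multiset.dvd_prod (Multiset.mem_map_of_mem _ hs)) _

lemma normalizedFactors_cycProd (hc : c ≠ 0) (hL : ∀ r ∈ L, 0 < r) :
    normalizedFactors (cycProd c a L)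
      = Multiset.replicate a X + L.map fun r => cyclotomic r ℚ := by
  have hirr : ∀ p ∈ L.map fun r => cyclotomic r ℚ, Irreducible p := by
    simp only [Multiset.mem_map]
    rintro _ ⟨r, hr, rfl⟩
    exact cyclotomic.irreducible_rat (hL r hr)
  have hprod : (L.map fun r => cyclotomic r ℚ).prod ≠ 0 :=
    Multiset.prod_ne_zero fun h => (hirr 0 h).ne_zero rfl
  have hCX : C c * X ^ a ≠ 0 := mul_ne_zero (C_ne_zero.2 hc) (pow_ne_zero _ X_ne_zero)
  rw [cycProd, normalizedFactors_mul hCX hprod,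
    normalizedFactors_mul (C_ne_zero.2 hc) (pow_ne_zero _ X_ne_zero),
    normalizedFactors_of_isUnit (isUnit_C.2 hc.isUnit), irreducible_X.normalizedFactors_pow,
    normalizedFactors_prod_eq _ hirr, monic_X.normalize_eq_self, zero_add, Multiset.map_map]
  congr 1
  exact Multiset.map_congr rfl fun r _ => (cyclotomic.monic r ℚ).normalize_eq_self

lemma multiplicity_X_cycProd (hc : c ≠ 0) (hL : ∀ r ∈ L, 0 < r) :
    multiplicity X (cycProd c a L) = a := by
  rw [multiplicity_eq_count_normalizedFactors irreducible_X (cycProd_ne_zero hc),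
    normalizedFactors_cycProd hc hL, monic_X.normalize_eq_self, Multiset.count_add,
    Multiset.count_replicate_self, Multiset.count_eq_zero_of_notMem, add_zero]
  simp only [Multiset.mem_map, not_exists, not_and]
  exact fun r hr => cyclotomic_ne_X (hL r hr).ne'

lemma multiplicity_cyclotomic_cycProd (hc : c ≠ 0) (hL : ∀ r ∈ L, 0 < r) {s : ℕ}
    (hs : 0 < s) :
    multiplicity (cyclotomic s ℚ) (cycProd c a L) = L.count s := by
  rw [multiplicity_eq_count_normalizedFactors (cyclotomic.irreducible_rat hs)
      (cycProd_ne_zero hc), normalizedFactors_cycProd hc hL,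
    (cyclotomic.monic s ℚ).normalize_eq_self, Multiset.count_add, Multiset.count_replicate,
    if_neg (cyclotomic_ne_X hs.ne').symm, zero_add,
    Multiset.count_map_eq_count' _ _ cyclotomic_injective]

lemma Bd_cycProd (d : ℕ) (hc : c ≠ 0) (hL : ∀ r ∈ L, 0 < r) :
    Bd d (cycProd c a L) = 2 * a + (L.map fun r => (r.totient : ℚ) + d * phiD d r).sum := by
  classical
  have hsub : L.toFinset ⊆ Icc 1 (2 * (cycProd c a L).natDegree ^ 2 + 1) := by
    intro s hs
    have hs := Multiset.mem_toFinset.1 hs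
    have hdvd : cyclotomic s ℚ ∣ cycProd c a L := cyclotomic_dvd_cycProd hs
    have hdeg : s.totient ≤ (cycProd c a L).natDegree :=
      natDegree_cyclotomic s ℚ ▸ natDegree_le_of_dvd hdvd (cycProd_ne_zero hc)
    have := Nat.le_two_mul_totient_sq s
    have := Nat.pow_le_pow_left hdeg 2
    have := hL s hs
    simp only [mem_Icc]
    omega
  rw [Bd, multiplicity_X_cycProd hc hL, Finset.sum_multiset_map_count,
    sum_subset hsub fun s _ hs => by
      rw [Multiset.count_eq_zero_of_notMem (by simpa using hs), zero_smul]]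
  congr 1
  refine sum_congr rfl fun s hs => ?_
  rw [multiplicity_cyclotomic_cycProd hc hL (mem_Icc.1 hs).1, nsmul_eq_mul]

end cycProd

lemma onRay_aeval_of_isPosCycProduct {d : ℕ} (hd : 2 ≤ d) {f : ℚ[X]} (hf : IsPosCycProduct f)
    (hfd : ¬ cyclotomic d ℚ ∣ f) :
    OnRay (aeval (exp (2 * π * I / d)) f) (Bd d f / d : ℚ) := by
  obtain ⟨c, a, L, hc, hL, rfl⟩ := hf
  change OnRay (aeval _ (cycProd c a L)) (Bd d (cycProd c a L) / d : ℚ)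
  have hζ : OnRay (exp (2 * π * I / d)) (2 / d) := by
    convert onRay_exp (2 / d) using 2
    push_cast
    ring
  have hprod := OnRay.multiset_prod L fun r hr =>
    onRay_aeval_cyclotomic hd (hL r hr) fun hrd => hfd (hrd ▸ cyclotomic_dvd_cycProd hr)
  have hval := ((onRay_ofReal (Rat.cast_pos.2 hc)).mul (hζ.pow a)).mul hprod
  rw [Bd_cycProd d hc.ne' hL]
  convert hval using 1
  · simp [cycProd, map_multiset_prod, Multiset.map_map]
  · push_cast
    rw [Multiset.map_map, Multiset.sum_map_div]
    simp only [Function.comp_def, Rat.cast_add, Rat.cast_mul, Rat.cast_natCast]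
    ring

/-- Let `d ≥ 2` and `ζ = exp(2πi/d)`. Let `f, g ∈ ℚ[q]` each be a product of a positive
rational constant, a power of `q`, and cyclotomic polynomials, with `Φ_d` dividing neither
`f` nor `g`. If `f(ζ)/g(ζ)` is a real number, then `(B_d(f) − B_d(g))/d` is an integer;
moreover this integer is even if `f(ζ)/g(ζ) > 0` and odd if `f(ζ)/g(ζ) < 0`. -/
theorem Bd_sub_div_d_int_of_real (d : ℕ) (hd : 2 ≤ d) (f g : Polynomial ℚ)
    (hf : IsPosCycProduct f) (hg : IsPosCycProduct g)
    (hfd : ¬ cyclotomic d ℚ ∣ f) (hgd : ¬ cyclotomic d ℚ ∣ g)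
    (hreal : (aeval (Complex.exp (2 * Real.pi * Complex.I / d)) f /
        aeval (Complex.exp (2 * Real.pi * Complex.I / d)) g).im = 0) :
    ∃ n : ℤ, (Bd d f - Bd d g) / d = (n : ℚ) ∧
      (0 < (aeval (Complex.exp (2 * Real.pi * Complex.I / d)) f /
          aeval (Complex.exp (2 * Real.pi * Complex.I / d)) g).re → Even n) ∧
      ((aeval (Complex.exp (2 * Real.pi * Complex.I / d)) f /
          aeval (Complex.exp (2 * Real.pi * Complex.I / d)) g).re < 0 → Odd n) := by
  have hquot := (onRay_aeval_of_isPosCycProduct hd hf hfd).div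
    (onRay_aeval_of_isPosCycProduct hd hg hgd)
  obtain ⟨n, hn, hpos, hneg⟩ := hquot.exists_int_of_im_eq_zero hreal
  refine ⟨n, ?_, hpos, hneg⟩
  rw [sub_div]
  exact_mod_cast hn
end

section
/- Let i > j ≥ 0 be integers and d ≥ 2 an integer. Then B_d(q^i − q^j) = i + j + d·⌊(i−j)/d⌋ + d/2, and B_d(q^i + q^j) = i + j + d·(⌊2(i−j)/d⌋ − ⌊(i−j)/d⌋). -/
open Polynomial

/-!
With `n = i - j`, the two polynomials factor as `q^j ∏_{r ∣ n} Φ_r` and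
`q^j ∏_{r ∣ 2n, r ∤ n} Φ_r`, so `B_d` becomes `2j` plus sums of `φ(r) + d·φ_d(r)` over the
divisors of `n` and `2n`. Besides `∑_{r ∣ n} φ(r) = n`, the one identity needed is
`∑_{r ∣ n} φ_d(r) = ⌊n/d⌋ + 1/2`: sorting `1 ≤ m ≤ n/d` by `g = gcd(m, n)` writes `m = g·k` with
`k ≤ (n/g)/d` coprime to `n/g`, and the `1/2` is the value `φ_d(1)`.
-/

open Finset

namespace Polynomial

lemma X_not_dvd_cyclotomic {R : Type*} [CommRing R] [IsDomain R] {r : ℕ} [NeZero (r : R)] :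
    ¬ (X : R[X]) ∣ cyclotomic r R := by
  rw [X_dvd_iff, coeff_zero_eq_eval_zero, ← IsRoot.def, isRoot_cyclotomic_iff]
  exact fun h ↦ h.ne_zero (NeZero.of_neZero_natCast R).out rfl

lemma prime_cyclotomic_rat {r : ℕ} (hr : 0 < r) : Prime (cyclotomic r ℚ) :=
  (cyclotomic.irreducible_rat hr).prime

lemma emultiplicity_cyclotomic_cyclotomic_rat {r k : ℕ} (hr : 0 < r) :
    emultiplicity (cyclotomic r ℚ) (cyclotomic k ℚ) = if k = r then 1 else 0 := by
  split_ifs with h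
  · subst h
    exact (FiniteMultiplicity.of_prime_left (prime_cyclotomic_rat hr)
      (cyclotomic_ne_zero k ℚ)).emultiplicity_self
  · exact emultiplicity_eq_zero.2 fun hdvd ↦ (prime_cyclotomic_rat hr).not_isUnit
      ((cyclotomic.isCoprime_rat (Ne.symm h)).isUnit_of_dvd' dvd_rfl hdvd)

lemma emultiplicity_cyclotomic_X_rat {r : ℕ} (hr : 0 < r) :
    emultiplicity (cyclotomic r ℚ) X = 0 := by
  have : NeZero (r : ℚ) := ⟨by exact_mod_cast hr.ne'⟩
  refine emultiplicity_eq_zero.2 fun hdvd ↦ X_not_dvd_cyclotomic (R := ℚ) (r := r) ?_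
  exact ((prime_cyclotomic_rat hr).irreducible.dvd_irreducible_iff_associated irreducible_X
    |>.1 hdvd).symm.dvd

lemma multiplicity_X_X_pow_mul_prod_cyclotomic (j : ℕ) {s : Finset ℕ} (hs : 0 ∉ s) :
    multiplicity X (X ^ j * ∏ r ∈ s, cyclotomic r ℚ) = j := by
  refine multiplicity_eq_of_emultiplicity_eq_some ?_
  have hX : ∀ r ∈ s, emultiplicity (X : ℚ[X]) (cyclotomic r ℚ) = 0 := fun r hr ↦ by
    have : NeZero (r : ℚ) := ⟨by exact_mod_cast ne_of_mem_of_not_mem hr hs⟩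
    exact emultiplicity_eq_zero.2 X_not_dvd_cyclotomic
  rw [emultiplicity_mul prime_X, emultiplicity_pow_self_of_prime prime_X,
    Finset.emultiplicity_prod prime_X, sum_eq_zero hX, add_zero]

lemma multiplicity_cyclotomic_X_pow_mul_prod_cyclotomic (j : ℕ) (s : Finset ℕ) {k : ℕ}
    (hk : 0 < k) :
    multiplicity (cyclotomic k ℚ) (X ^ j * ∏ r ∈ s, cyclotomic r ℚ) = if k ∈ s then 1 else 0 := by
  refine multiplicity_eq_of_emultiplicity_eq_some ?_
  have hp := prime_cyclotomic_rat hk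
  rw [emultiplicity_mul hp, emultiplicity_pow hp, emultiplicity_cyclotomic_X_rat hk, mul_zero,
    zero_add, Finset.emultiplicity_prod hp]
  simp only [emultiplicity_cyclotomic_cyclotomic_rat hk, sum_ite_eq']
  split_ifs <;> rfl

end Polynomial

lemma Bd_X_pow_mul_prod_cyclotomic (d j : ℕ) {s : Finset ℕ}
    (hs : s ⊆ Icc 1 (2 * (X ^ j * ∏ r ∈ s, cyclotomic r ℚ).natDegree ^ 2 + 1)) :
    Bd d (X ^ j * ∏ r ∈ s, cyclotomic r ℚ) = 2 * j + ∑ r ∈ s, ((r.totient : ℚ) + d * phiD d r) := by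
  have hpos : ∀ r ∈ s, 0 < r := fun r hr ↦ (mem_Icc.1 (hs hr)).1
  rw [Bd, multiplicity_X_X_pow_mul_prod_cyclotomic j fun h ↦ (hpos 0 h).false,
    ← sum_subset hs fun r hr hrs ↦ ?_]
  · congr 1
    refine sum_congr rfl fun r hr ↦ ?_
    rw [multiplicity_cyclotomic_X_pow_mul_prod_cyclotomic j s (hpos r hr), if_pos hr,
      Nat.cast_one, one_mul]
  · rw [multiplicity_cyclotomic_X_pow_mul_prod_cyclotomic j s (mem_Icc.1 hr).1, if_neg hrs,
      Nat.cast_zero, zero_mul]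

namespace Nat

lemma card_filter_Icc_gcd_eq {n g : ℕ} (hg : g ∣ n) (d : ℕ) :
    #{m ∈ Icc 1 (n / d) | m.gcd n = g} = #{j ∈ Icc 1 (n / g / d) | j.gcd (n / g) = 1} := by
  rcases d.eq_zero_or_pos with rfl | hd
  · simp
  rcases g.eq_zero_or_pos with rfl | hg0
  · simp [Nat.eq_zero_of_zero_dvd hg]
  obtain ⟨x, rfl⟩ := hg
  rw [Nat.mul_div_cancel_left x hg0]
  symm
  refine card_bij (fun j _ ↦ g * j) ?_ (fun a _ b _ h ↦ Nat.eq_of_mul_eq_mul_left hg0 h) ?_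
  · simp only [mem_filter, mem_Icc, Nat.le_div_iff_mul_le hd]
    rintro j ⟨⟨hj1, hjx⟩, hj⟩
    refine ⟨⟨Nat.mul_pos hg0 hj1, ?_⟩, by rw [Nat.gcd_mul_left, hj, mul_one]⟩
    rw [mul_assoc]
    exact Nat.mul_le_mul_left g hjx
  · simp only [mem_filter, mem_Icc, Nat.le_div_iff_mul_le hd]
    rintro m ⟨⟨hm1, hmx⟩, hm⟩
    obtain ⟨q, rfl⟩ : g ∣ m := hm ▸ Nat.gcd_dvd_left m (g * x)
    rw [Nat.gcd_mul_left, Nat.mul_eq_left hg0.ne'] at hm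
    rw [mul_assoc] at hmx
    exact ⟨q, ⟨⟨Nat.pos_of_mul_pos_left hm1, Nat.le_of_mul_le_mul_left hmx hg0⟩, hm⟩, rfl⟩

lemma sum_divisors_card_filter_Icc_coprime (n d : ℕ) :
    ∑ r ∈ n.divisors, #{j ∈ Icc 1 (r / d) | j.gcd r = 1} = n / d := by
  rcases n.eq_zero_or_pos with rfl | hn
  · simp
  rw [← sum_div_divisors n]
  have := card_eq_sum_card_fiberwise (s := Icc 1 (n / d)) (t := n.divisors) (f := (·.gcd n))
    fun m _ ↦ mem_divisors.2 ⟨Nat.gcd_dvd_right m n, hn.ne'⟩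
  rw [Nat.card_Icc, Nat.add_sub_cancel] at this
  rw [this]
  exact sum_congr rfl fun g hg ↦ (card_filter_Icc_gcd_eq (dvd_of_mem_divisors hg) d).symm

end Nat

lemma phiD_eq_card_add {d : ℕ} (hd : 2 ≤ d) (r : ℕ) :
    phiD d r = #{j ∈ Icc 1 (r / d) | j.gcd r = 1} + if r = 1 then 1 / 2 else 0 := by
  unfold phiD
  split_ifs with hr
  · simp [hr, Nat.div_eq_of_lt (by omega : 1 < d)]
  · rw [add_zero]

lemma sum_divisors_phiD {d : ℕ} (hd : 2 ≤ d) {n : ℕ} (hn : n ≠ 0) :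
    ∑ r ∈ n.divisors, phiD d r = (n / d : ℕ) + 1 / 2 := by
  simp only [phiD_eq_card_add hd, sum_add_distrib, sum_ite_eq', Nat.one_mem_divisors.2 hn,
    if_true, ← Nat.cast_sum, Nat.sum_divisors_card_filter_Icc_coprime]

lemma sum_divisors_totient_add_phiD {d : ℕ} (hd : 2 ≤ d) {n : ℕ} (hn : n ≠ 0) :
    ∑ r ∈ n.divisors, ((r.totient : ℚ) + d * phiD d r) = n + d * ((n / d : ℕ) + 1 / 2) := by
  rw [sum_add_distrib, ← mul_sum, sum_divisors_phiD hd hn, ← Nat.cast_sum, Nat.sum_totient]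

namespace Polynomial

variable {R : Type*} [CommRing R]

lemma X_pow_add_sub_X_pow_eq_prod_cyclotomic (j : ℕ) {n : ℕ} (hn : 0 < n) :
    (X : R[X]) ^ (j + n) - X ^ j = X ^ j * ∏ r ∈ n.divisors, cyclotomic r R := by
  rw [prod_cyclotomic_eq_X_pow_sub_one hn, mul_sub, mul_one, pow_add]

lemma X_pow_add_one_eq_prod_cyclotomic {n : ℕ} (hn : 0 < n) :
    (X : R[X]) ^ n + 1 = ∏ r ∈ (2 * n).divisors \ n.divisors, cyclotomic r R := by
  have hsplit := prod_sdiff (f := fun r ↦ cyclotomic r R)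
    (Nat.divisors_subset_of_dvd (by omega) (dvd_mul_left n 2))
  rw [prod_cyclotomic_eq_X_pow_sub_one hn, prod_cyclotomic_eq_X_pow_sub_one (by omega)] at hsplit
  have hreg : IsRightRegular ((X : R[X]) ^ n - 1) := by
    simpa using (monic_X_pow_sub_C (1 : R) hn.ne').isRegular.right
  refine hreg (?_ : (X ^ n + 1) * _ = _ * _)
  rw [hsplit, two_mul, pow_add]
  ring

lemma X_pow_add_add_X_pow_eq_prod_cyclotomic (j : ℕ) {n : ℕ} (hn : 0 < n) :
    (X : R[X]) ^ (j + n) + X ^ j = X ^ j * ∏ r ∈ (2 * n).divisors \ n.divisors, cyclotomic r R := by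
  rw [← X_pow_add_one_eq_prod_cyclotomic hn, mul_add, mul_one, pow_add]

end Polynomial

/-- Let `i > j ≥ 0` and `d ≥ 2` be integers. Then
`B_d(q^i − q^j) = i + j + d·⌊(i−j)/d⌋ + d/2`, and
`B_d(q^i + q^j) = i + j + d·(⌊2(i−j)/d⌋ − ⌊(i−j)/d⌋)`. -/
theorem Bd_X_pow_sub_and_add (d i j : ℕ) (hd : 2 ≤ d) (hij : j < i) :
    Bd d (X ^ i - X ^ j)
      = (i : ℚ) + j + d * (((i - j) / d : ℕ) : ℚ) + (d : ℚ) / 2 ∧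
    Bd d (X ^ i + X ^ j)
      = (i : ℚ) + j + d * ((((2 * (i - j)) / d : ℕ) : ℚ) - (((i - j) / d : ℕ) : ℚ)) := by
  obtain ⟨n, rfl⟩ : ∃ n, i = j + n := ⟨i - j, by omega⟩
  have hn : 0 < n := by omega
  have hdeg : ((X : ℚ[X]) ^ j).natDegree < ((X : ℚ[X]) ^ (j + n)).natDegree := by simpa using hn
  have hIcc : (2 * n).divisors ⊆ Icc 1 (2 * (j + n) ^ 2 + 1) := fun r hr ↦
    mem_Icc.2 ⟨Nat.pos_of_mem_divisors hr, by nlinarith [Nat.divisor_le hr]⟩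
  have hsub : n.divisors ⊆ (2 * n).divisors :=
    Nat.divisors_subset_of_dvd (by omega) (dvd_mul_left n 2)
  simp only [Nat.add_sub_cancel_left, Nat.cast_add]
  constructor
  · have hdeg_sub := natDegree_sub_eq_left_of_natDegree_lt hdeg
    rw [X_pow_add_sub_X_pow_eq_prod_cyclotomic j hn] at hdeg_sub ⊢
    rw [Bd_X_pow_mul_prod_cyclotomic d j (by rw [hdeg_sub, natDegree_X_pow]; exact hsub.trans hIcc),
      sum_divisors_totient_add_phiD hd hn.ne']
    ring
  · have hdeg_add := natDegree_add_eq_left_of_natDegree_lt hdeg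
    rw [X_pow_add_add_X_pow_eq_prod_cyclotomic j hn] at hdeg_add ⊢
    rw [Bd_X_pow_mul_prod_cyclotomic d j
      (by rw [hdeg_add, natDegree_X_pow]; exact sdiff_subset.trans hIcc), sum_sdiff_eq_sub hsub,
      sum_divisors_totient_add_phiD hd (by omega), sum_divisors_totient_add_phiD hd hn.ne']
    push_cast
    ring
end

section
/- Let d ≥ 2 be an integer and set e = d if d ≡ 0 (mod 4), e = 2d if d is odd, and e = d/2 if d ≡ 2 (mod 4). For integers i, j ≥ 0 with i ≠ j and i + e ≠ j, set Δ(i,j) = B_d((−q)^{i+e} − (−q)^j) − B_d((−q)^i − (−q)^j). Then: (1) if d ≡ 0 (mod 4): Δ(i,j) = 2d when i−j > 0 or (i−j is odd and i−j > −d/2); Δ(i,j) = d when i−j is even and −d < i−j < 0; Δ(i,j) = 0 when i−j < −d or (i−j is odd and i−j < −d/2). (2) if d is odd (so e = 2d): Δ(i,j) = 4d when i−j > 0 or (i−j is odd and i−j > −d/2); Δ(i,j) = 3d when i−j is even and −d < i−j < 0; Δ(i,j) = 2d when i−j is odd and −3d/2 < i−j < −d/2; Δ(i,j) = d when i−j is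 even and −2d < i−j < −d; Δ(i,j) = 0 when i−j < −2d or (i−j is odd and i−j < −3d/2). (3) if d ≡ 2 (mod 4) (so e = d/2): Δ(i,j) = d when i−j > 0 or (i−j is odd and i−j > −d/2); Δ(i,j) = 0 when i−j < −d/2 or (i−j is even and i−j < 0). -/
open Polynomial

/-- `e = d` if `4 ∣ d`, `e = 2d` if `d` is odd, and `e = d/2` if `d ≡ 2 (mod 4)`. -/
def eOf (d : ℕ) : ℕ := if d % 4 = 0 then d else if d % 2 = 1 then 2 * d else d / 2

/-- `Δ(i,j) = B_d((−q)^{i+e} − (−q)^j) − B_d((−q)^i − (−q)^j)`. -/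
noncomputable def DeltaU (d i j : ℕ) : ℚ :=
  Bd d ((-X : Polynomial ℚ) ^ (i + eOf d) - (-X) ^ j) - Bd d ((-X) ^ i - (-X) ^ j)



theorem sum_card_coprime (d n : ℕ) (hd : 0 < d) (hn : 0 < n) :
    ∑ r ∈ n.divisors, (((Finset.Icc 1 (r / d)).filter fun j => Nat.gcd j r = 1).card) = n / d := by
  have key : ∀ g ∈ n.divisors,
      ((Finset.Icc 1 (n / d)).filter fun k => Nat.gcd k n = g).card
        = ((Finset.Icc 1 ((n / g) / d)).filter fun j => Nat.gcd j (n / g) = 1).card := by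
    intro g hg
    have hgdvd : g ∣ n := (Nat.mem_divisors.mp hg).1
    obtain ⟨r, hr⟩ := hgdvd
    have hg0 : 0 < g := Nat.pos_of_dvd_of_pos ⟨r, hr⟩ hn
    have hng : n / g = r := by rw [hr]; exact Nat.mul_div_cancel_left r hg0
    rw [hng]
    symm
    apply Finset.card_bij (fun j _ => g * j)
    · intro j hj
      simp only [Finset.mem_filter, Finset.mem_Icc] at hj ⊢
      obtain ⟨⟨hj1, hj2⟩, hjcop⟩ := hj
      rw [Nat.le_div_iff_mul_le hd] at hj2
      refine ⟨⟨Nat.one_le_iff_ne_zero.mpr (by positivity), ?_⟩, ?_⟩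
      · rw [Nat.le_div_iff_mul_le hd, mul_assoc, hr]
        exact Nat.mul_le_mul_left g hj2
      · rw [hr, Nat.gcd_mul_left, hjcop, mul_one]
    · intro a ha b hb hab
      exact Nat.eq_of_mul_eq_mul_left hg0 hab
    · intro k hk
      simp only [Finset.mem_filter, Finset.mem_Icc] at hk
      obtain ⟨⟨hk1, hk2⟩, hkg⟩ := hk
      have hgk : g ∣ k := hkg ▸ Nat.gcd_dvd_left k n
      obtain ⟨j, hj⟩ := hgk
      refine ⟨j, ?_, hj.symm⟩
      simp only [Finset.mem_filter, Finset.mem_Icc]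
      have hj1 : 1 ≤ j := by
        rcases Nat.eq_zero_or_pos j with h | h
        · subst h; simp at hj; omega
        · exact h
      have hgcd1 : Nat.gcd j r = 1 := by
        have h2 : g * Nat.gcd j r = g := by
          rw [← Nat.gcd_mul_left, ← hj, ← hr]; exact hkg
        have := Nat.eq_of_mul_eq_mul_left hg0 (h2.trans (mul_one g).symm)
        exact this
      refine ⟨⟨hj1, ?_⟩, hgcd1⟩
      rw [Nat.le_div_iff_mul_le hd] at hk2 ⊢
      rw [hj, hr, mul_assoc] at hk2
      exact Nat.le_of_mul_le_mul_left hk2 hg0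
  calc ∑ r ∈ n.divisors, (((Finset.Icc 1 (r / d)).filter fun j => Nat.gcd j r = 1).card)
      = ∑ g ∈ n.divisors,
          (((Finset.Icc 1 ((n / g) / d)).filter fun j => Nat.gcd j (n / g) = 1).card) := by
        exact (Nat.sum_div_divisors n
          (fun r => ((Finset.Icc 1 (r / d)).filter fun j => Nat.gcd j r = 1).card)).symm
    _ = ∑ g ∈ n.divisors, ((Finset.Icc 1 (n / d)).filter fun k => Nat.gcd k n = g).card := by
        exact Finset.sum_congr rfl fun g hg => (key g hg).symm
    _ = (Finset.Icc 1 (n / d)).card := by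
        symm
        apply Finset.card_eq_sum_card_fiberwise
        intro k hk
        exact Nat.mem_divisors.mpr ⟨Nat.gcd_dvd_right k n, hn.ne'⟩
    _ = n / d := by rw [Nat.card_Icc]; simp


theorem not_X_dvd_cyclotomic (r : ℕ) (hr : 1 ≤ r) : ¬ (X : ℚ[X]) ∣ cyclotomic r ℚ := by
  rw [X_dvd_iff]
  rcases eq_or_lt_of_le hr with h | h
  · rw [← h, cyclotomic_one]; simp
  · rw [cyclotomic_coeff_zero _ h]; norm_num

theorem not_cyclotomic_dvd_X (r : ℕ) (hr : 1 ≤ r) : ¬ (cyclotomic r ℚ) ∣ X := by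
  intro h
  exact not_X_dvd_cyclotomic r hr
    ((Irreducible.associated_of_dvd (cyclotomic.irreducible_rat hr) irreducible_X h).symm.dvd)

theorem cyclotomic_prime (r : ℕ) (hr : 1 ≤ r) : Prime (cyclotomic r ℚ) :=
  (cyclotomic.irreducible_rat hr).prime

theorem mult_X_mul (b : ℕ) (g : ℚ[X]) (hg : g.coeff 0 ≠ 0) :
    multiplicity (X : ℚ[X]) (X ^ b * g) = b := by
  apply multiplicity_eq_of_dvd_of_not_dvd ⟨g, rfl⟩
  rw [pow_succ]
  rw [mul_dvd_mul_iff_left (pow_ne_zero b X_ne_zero)]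
  rw [X_dvd_iff]
  exact hg

theorem mult_cyc_one (b r : ℕ) (hr : 1 ≤ r) (g : ℚ[X]) (hdvd : cyclotomic r ℚ ∣ g)
    (hsq : Squarefree g) : multiplicity (cyclotomic r ℚ) (X ^ b * g) = 1 := by
  apply multiplicity_eq_of_dvd_of_not_dvd
  · simpa using hdvd.mul_left (X ^ b)
  · intro h
    have hcop : IsCoprime ((cyclotomic r ℚ) ^ (1 + 1)) (X ^ b : ℚ[X]) := by
      apply IsCoprime.pow
      exact ((cyclotomic.irreducible_rat hr).coprime_iff_not_dvd).mpr (not_cyclotomic_dvd_X r hr)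
    have h2 : (cyclotomic r ℚ) ^ (1 + 1) ∣ g := by
      exact hcop.dvd_of_dvd_mul_left h
    rw [pow_two] at h2
    exact (cyclotomic.irreducible_rat hr).not_isUnit (hsq _ h2)

theorem mult_cyc_zero (b r : ℕ) (hr : 1 ≤ r) (g : ℚ[X]) (hdvd : ¬ cyclotomic r ℚ ∣ g) :
    multiplicity (cyclotomic r ℚ) (X ^ b * g) = 0 := by
  rw [multiplicity_eq_zero]
  intro h
  rcases (cyclotomic_prime r hr).dvd_mul.mp h with h | h
  · exact not_cyclotomic_dvd_X r hr ((cyclotomic_prime r hr).dvd_of_dvd_pow h)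
  · exact hdvd h

theorem cyclotomic_dvd_X_pow_sub_one_iff (r n : ℕ) (hr : 1 ≤ r) (hn : 0 < n) :
    cyclotomic r ℚ ∣ X ^ n - 1 ↔ r ∣ n := by
  constructor
  · intro h
    have h2 : cyclotomic r ℂ ∣ X ^ n - 1 := by
      have := Polynomial.map_dvd (algebraMap ℚ ℂ) h
      simpa [Polynomial.map_cyclotomic] using this
    have hζ := Complex.isPrimitiveRoot_exp r (by omega)
    have hroot : IsRoot (cyclotomic r ℂ) (Complex.exp (2 * Real.pi * Complex.I / r)) :=
      hζ.isRoot_cyclotomic hr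
    have h3 : IsRoot ((X : ℂ[X]) ^ n - 1) _ := hroot.dvd h2
    rw [IsRoot.def] at h3
    simp only [eval_sub, eval_pow, eval_one, eval_X, sub_eq_zero] at h3
    exact (hζ.pow_eq_one_iff_dvd n).mp h3
  · intro h
    rw [← prod_cyclotomic_eq_X_pow_sub_one hn ℚ]
    exact Finset.dvd_prod_of_mem _ (Nat.mem_divisors.mpr ⟨h, hn.ne'⟩)

theorem squarefree_X_pow_sub_one (n : ℕ) (hn : 0 < n) : Squarefree ((X : ℚ[X]) ^ n - 1) := by
  have h : ((X : ℚ[X]) ^ n - 1).Separable := by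
    rw [X_pow_sub_one_separable_iff]
    exact_mod_cast Nat.cast_ne_zero.mpr hn.ne'
  exact h.squarefree

theorem X_pow_mul_id (n : ℕ) :
    ((X : ℚ[X]) ^ n - 1) * (X ^ n + 1) = X ^ (2 * n) - 1 := by
  rw [two_mul, pow_add]; ring

theorem cyclotomic_dvd_X_pow_add_one_iff (r n : ℕ) (hr : 1 ≤ r) (hn : 0 < n) :
    cyclotomic r ℚ ∣ X ^ n + 1 ↔ (r ∣ 2 * n ∧ ¬ r ∣ n) := by
  have h2n : 0 < 2 * n := by omega
  constructor
  · intro h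
    have h1 : cyclotomic r ℚ ∣ X ^ (2 * n) - 1 := by
      rw [← X_pow_mul_id n]; exact h.mul_left _
    refine ⟨(cyclotomic_dvd_X_pow_sub_one_iff r (2*n) hr h2n).mp h1, fun hrn => ?_⟩
    have h3 : cyclotomic r ℚ ∣ X ^ n - 1 := (cyclotomic_dvd_X_pow_sub_one_iff r n hr hn).mpr hrn
    have h4 : cyclotomic r ℚ * cyclotomic r ℚ ∣ X ^ (2 * n) - 1 := by
      rw [← X_pow_mul_id n]; exact mul_dvd_mul h3 h
    exact (cyclotomic.irreducible_rat hr).not_isUnit (squarefree_X_pow_sub_one (2*n) h2n _ h4)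
  · rintro ⟨h2, h1⟩
    have h3 : cyclotomic r ℚ ∣ (X ^ n - 1) * (X ^ n + 1) := by
      rw [X_pow_mul_id n]
      exact (cyclotomic_dvd_X_pow_sub_one_iff r (2*n) hr h2n).mpr h2
    rcases (cyclotomic_prime r hr).dvd_mul.mp h3 with h | h
    · exact absurd ((cyclotomic_dvd_X_pow_sub_one_iff r n hr hn).mp h) h1
    · exact h

theorem Wsum (d n : ℕ) (hd : 2 ≤ d) (hn : 0 < n) :
    ∑ r ∈ n.divisors, ((Nat.totient r : ℚ) + d * phiD d r)
      = n + d * ((n / d : ℕ) : ℚ) + d / 2 := by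
  rw [Finset.sum_add_distrib, ← Finset.mul_sum]
  have h1 : ∑ r ∈ n.divisors, (Nat.totient r : ℚ) = n := by
    rw [← Nat.cast_sum]
    exact_mod_cast congrArg (Nat.cast : ℕ → ℚ) (Nat.sum_totient n)
  have h2 : ∑ r ∈ n.divisors, phiD d r = ((n / d : ℕ) : ℚ) + 1 / 2 := by
    have hcard1 : (((Finset.Icc 1 (1 / d)).filter fun j => Nat.gcd j 1 = 1).card : ℚ) = 0 := by
      have : 1 / d = 0 := Nat.div_eq_of_lt hd
      rw [this]
      simp
    have key : ∀ r ∈ n.divisors, phiD d r =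
        (((Finset.Icc 1 (r / d)).filter fun j => Nat.gcd j r = 1).card : ℚ)
          + if r = 1 then 1 / 2 else 0 := by
      intro r _
      unfold phiD
      split
      · next h => subst h; rw [hcard1]; ring
      · ring
    rw [Finset.sum_congr rfl key, Finset.sum_add_distrib]
    rw [Finset.sum_ite_eq' n.divisors 1 (fun _ => (1 / 2 : ℚ))]
    rw [if_pos (Nat.one_mem_divisors.mpr hn.ne')]
    rw [← Nat.cast_sum, sum_card_coprime d n (by omega) hn]
  rw [h1, h2]
  ring

theorem squarefree_X_pow_add_one (n : ℕ) (hn : 0 < n) : Squarefree ((X : ℚ[X]) ^ n + 1) := by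
  have h : ((X : ℚ[X]) ^ n + 1) ∣ X ^ (2 * n) - 1 := by
    refine ⟨X ^ n - 1, ?_⟩
    rw [two_mul, pow_add]; ring
  exact (squarefree_X_pow_sub_one (2 * n) (by omega)).squarefree_of_dvd h

theorem Bd_sub (d b n : ℕ) (hd : 2 ≤ d) (hn : 0 < n) :
    Bd d (X ^ b * (X ^ n - 1)) = 2 * b + n + d * ((n / d : ℕ) : ℚ) + d / 2 := by
  have hg0 : ((X : ℚ[X]) ^ n - 1).coeff 0 ≠ 0 := by
    simp [coeff_sub, coeff_X_pow, hn.ne]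
  have hdeg : (X ^ b * ((X : ℚ[X]) ^ n - 1)).natDegree = b + n := by
    rw [natDegree_mul (pow_ne_zero b X_ne_zero)
      (by simpa using X_pow_sub_C_ne_zero hn (1 : ℚ))]
    rw [natDegree_X_pow]
    congr 1
    simpa using (natDegree_X_pow_sub_C (n := n) (r := (1:ℚ)))
  have hsub : n.divisors ⊆ Finset.Icc 1 (2 * (b + n) ^ 2 + 1) := by
    intro r hr
    obtain ⟨h1, h2⟩ := Nat.mem_divisors.mp hr
    have hr1 : 1 ≤ r := Nat.pos_of_dvd_of_pos h1 hn
    have hrn : r ≤ n := Nat.le_of_dvd hn h1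
    rw [Finset.mem_Icc]
    constructor
    · exact hr1
    · nlinarith
  unfold Bd
  rw [hdeg, mult_X_mul b _ hg0]
  have hsum : ∀ r ∈ Finset.Icc 1 (2 * (b + n) ^ 2 + 1),
      (multiplicity (cyclotomic r ℚ) (X ^ b * ((X : ℚ[X]) ^ n - 1)) : ℚ)
          * ((Nat.totient r : ℚ) + d * phiD d r)
        = if r ∈ n.divisors then ((Nat.totient r : ℚ) + d * phiD d r) else 0 := by
    intro r hr
    have hr1 : 1 ≤ r := (Finset.mem_Icc.mp hr).1
    by_cases hrd : r ∈ n.divisors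
    · rw [if_pos hrd, mult_cyc_one b r hr1 _
        ((cyclotomic_dvd_X_pow_sub_one_iff r n hr1 hn).mpr (Nat.mem_divisors.mp hrd).1)
        (squarefree_X_pow_sub_one n hn)]
      push_cast; ring
    · rw [if_neg hrd, mult_cyc_zero b r hr1 _ (fun h =>
        hrd (Nat.mem_divisors.mpr ⟨(cyclotomic_dvd_X_pow_sub_one_iff r n hr1 hn).mp h, hn.ne'⟩))]
      push_cast; ring
  rw [Finset.sum_congr rfl hsum, Finset.sum_ite_mem,
    Finset.inter_eq_right.mpr hsub, Wsum d n hd hn]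
  push_cast
  ring

theorem Bd_add (d b n : ℕ) (hd : 2 ≤ d) (hn : 0 < n) :
    Bd d (X ^ b * (X ^ n + 1))
      = 2 * b + n + d * (((2 * n / d : ℕ) : ℚ) - ((n / d : ℕ) : ℚ)) := by
  have h2n : 0 < 2 * n := by omega
  have hg0 : ((X : ℚ[X]) ^ n + 1).coeff 0 ≠ 0 := by
    simp [coeff_add, coeff_X_pow, hn.ne]
  have hdeg : (X ^ b * ((X : ℚ[X]) ^ n + 1)).natDegree = b + n := by
    rw [natDegree_mul (pow_ne_zero b X_ne_zero)
      (by simpa using X_pow_add_C_ne_zero hn (1 : ℚ))]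
    rw [natDegree_X_pow]
    congr 1
    simpa using (natDegree_X_pow_add_C (n := n) (r := (1:ℚ)))
  have hsub : (2 * n).divisors ⊆ Finset.Icc 1 (2 * (b + n) ^ 2 + 1) := by
    intro r hr
    obtain ⟨h1, h2⟩ := Nat.mem_divisors.mp hr
    have hr1 : 1 ≤ r := Nat.pos_of_dvd_of_pos h1 h2n
    have hrn : r ≤ 2 * n := Nat.le_of_dvd h2n h1
    rw [Finset.mem_Icc]
    refine ⟨hr1, by nlinarith⟩
  have hsub2 : n.divisors ⊆ (2 * n).divisors :=
    Nat.divisors_subset_of_dvd h2n.ne' (dvd_mul_left n 2)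
  unfold Bd
  rw [hdeg, mult_X_mul b _ hg0]
  have hsum : ∀ r ∈ Finset.Icc 1 (2 * (b + n) ^ 2 + 1),
      (multiplicity (cyclotomic r ℚ) (X ^ b * ((X : ℚ[X]) ^ n + 1)) : ℚ)
          * ((Nat.totient r : ℚ) + d * phiD d r)
        = if r ∈ (2 * n).divisors \ n.divisors
            then ((Nat.totient r : ℚ) + d * phiD d r) else 0 := by
    intro r hr
    have hr1 : 1 ≤ r := (Finset.mem_Icc.mp hr).1
    by_cases hrd : r ∈ (2 * n).divisors \ n.divisors
    · rw [Finset.mem_sdiff, Nat.mem_divisors, Nat.mem_divisors] at hrd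
      rw [if_pos (by rw [Finset.mem_sdiff, Nat.mem_divisors, Nat.mem_divisors]; exact hrd),
        mult_cyc_one b r hr1 _
          ((cyclotomic_dvd_X_pow_add_one_iff r n hr1 hn).mpr
            ⟨hrd.1.1, fun h => hrd.2 ⟨h, hn.ne'⟩⟩)
          (squarefree_X_pow_add_one n hn)]
      push_cast; ring
    · rw [if_neg hrd, mult_cyc_zero b r hr1 _ (fun h => by
        obtain ⟨h1, h2⟩ := (cyclotomic_dvd_X_pow_add_one_iff r n hr1 hn).mp h
        exact hrd (Finset.mem_sdiff.mpr ⟨Nat.mem_divisors.mpr ⟨h1, h2n.ne'⟩,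
          fun hc => h2 (Nat.mem_divisors.mp hc).1⟩))]
      push_cast; ring
  rw [Finset.sum_congr rfl hsum, Finset.sum_ite_mem,
    Finset.inter_eq_right.mpr (fun r hr => hsub (Finset.mem_sdiff.mp hr).1),
    Finset.sum_sdiff_eq_sub hsub2, Wsum d (2 * n) hd h2n, Wsum d n hd hn]
  push_cast
  ring

noncomputable def G (d n : ℕ) : ℚ :=
  if Even n then n + d * ((n / d : ℕ) : ℚ) + d / 2
  else n + d * (((2 * n / d : ℕ) : ℚ) - ((n / d : ℕ) : ℚ))

theorem Bd_neg (d : ℕ) (f : ℚ[X]) : Bd d (-f) = Bd d f := by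
  unfold Bd
  rw [natDegree_neg]
  simp [multiplicity_neg]

theorem Bd_lt (d a b : ℕ) (hd : 2 ≤ d) (hab : b < a) :
    Bd d ((-X : ℚ[X]) ^ a - (-X) ^ b) = 2 * b + G d (a - b) := by
  obtain ⟨n, hn0, ha⟩ : ∃ n, 0 < n ∧ a = b + n := ⟨a - b, by omega, by omega⟩
  subst ha
  have hab' : b + n - b = n := by omega
  rw [hab']
  rcases Nat.even_or_odd n with hne | hno
  · rw [G, if_pos hne]
    rcases Nat.even_or_odd b with hb | hb
    · have hid : ((-X : ℚ[X]) ^ (b + n) - (-X) ^ b) = X ^ b * (X ^ n - 1) := by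
        rw [(hb.add hne).neg_pow, hb.neg_pow]; ring
      rw [hid, Bd_sub d b n hd hn0]; ring
    · have hid : ((-X : ℚ[X]) ^ (b + n) - (-X) ^ b) = -(X ^ b * (X ^ n - 1)) := by
        rw [(hb.add_even hne).neg_pow, hb.neg_pow]; ring
      rw [hid, Bd_neg, Bd_sub d b n hd hn0]; ring
  · rw [G, if_neg (Nat.not_even_iff_odd.mpr hno)]
    rcases Nat.even_or_odd b with hb | hb
    · have hid : ((-X : ℚ[X]) ^ (b + n) - (-X) ^ b) = -(X ^ b * (X ^ n + 1)) := by
        rw [(hb.add_odd hno).neg_pow, hb.neg_pow]; ring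
      rw [hid, Bd_neg, Bd_add d b n hd hn0]; ring
    · have hid : ((-X : ℚ[X]) ^ (b + n) - (-X) ^ b) = X ^ b * (X ^ n + 1) := by
        rw [(hb.add_odd hno).neg_pow, hb.neg_pow]; ring
      rw [hid, Bd_add d b n hd hn0]; ring

theorem Bd_pair (d a b : ℕ) (hd : 2 ≤ d) (hab : a ≠ b) :
    Bd d ((-X : ℚ[X]) ^ a - (-X) ^ b)
      = 2 * ((min a b : ℕ) : ℚ) + G d (max a b - min a b) := by
  rcases lt_or_gt_of_ne hab with h | h
  · rw [min_eq_left h.le, max_eq_right h.le, ← Bd_neg, neg_sub, Bd_lt d b a hd h]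
  · rw [min_eq_right h.le, max_eq_left h.le, Bd_lt d a b hd h]


noncomputable def Dexpr (d e i j : ℕ) : ℚ :=
  (2 * ((min (i + e) j : ℕ) : ℚ) + G d (max (i + e) j - min (i + e) j))
    - (2 * ((min i j : ℕ) : ℚ) + G d (max i j - min i j))

theorem DeltaU_eq (d i j : ℕ) (hd : 2 ≤ d) (hij : i ≠ j) (hije : i + eOf d ≠ j) :
    DeltaU d i j = Dexpr d (eOf d) i j := by
  unfold DeltaU Dexpr
  rw [Bd_pair d (i + eOf d) j hd hije, Bd_pair d i j hd hij]

theorem G_even {d n : ℕ} (h : n % 2 = 0) :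
    G d n = n + d * ((n / d : ℕ) : ℚ) + d / 2 := by
  rw [G, if_pos (Nat.even_iff.mpr h)]

theorem G_odd {d n : ℕ} (h : n % 2 = 1) :
    G d n = n + d * (((2 * n / d : ℕ) : ℚ) - ((n / d : ℕ) : ℚ)) := by
  rw [G, if_neg (by rw [Nat.even_iff]; omega)]

theorem div_one' {m d : ℕ} (h1 : d ≤ m) (h2 : m < 2 * d) : m / d = 1 := by
  have hd : 0 < d := by omega
  obtain ⟨x, hx⟩ : ∃ x, m = x + d := ⟨m - d, by omega⟩
  subst hx
  rw [Nat.add_div_right _ hd, Nat.div_eq_of_lt (by omega)]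

theorem div_two' {m d : ℕ} (hd : 0 < d) (h1 : 2 * d ≤ m) (h2 : m < 3 * d) : m / d = 2 := by
  obtain ⟨x, hx⟩ : ∃ x, m = x + d + d := ⟨m - 2 * d, by omega⟩
  subst hx
  rw [Nat.add_div_right _ hd, Nat.add_div_right _ hd, Nat.div_eq_of_lt (by omega)]

theorem div_three' {m d : ℕ} (hd : 0 < d) (h1 : 3 * d ≤ m) (h2 : m < 4 * d) : m / d = 3 := by
  obtain ⟨x, hx⟩ : ∃ x, m = x + d + d + d := ⟨m - 3 * d, by omega⟩
  subst hx
  rw [Nat.add_div_right _ hd, Nat.add_div_right _ hd, Nat.add_div_right _ hd,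
    Nat.div_eq_of_lt (by omega)]

-- case 1, t > 0
theorem c1_pos (d i j : ℕ) (hd : 2 ≤ d) (h2 : d % 2 = 0) (h : j < i) :
    Dexpr d d i j = 2 * d := by
  have hd0 : 0 < d := by omega
  obtain ⟨n, hn0, hi⟩ : ∃ n, 0 < n ∧ i = j + n := ⟨i - j, by omega, by omega⟩
  subst hi
  have e1 : min (j + n + d) j = j := by omega
  have e2 : max (j + n + d) j - min (j + n + d) j = n + d := by omega
  have e3 : min (j + n) j = j := by omega
  have e4 : max (j + n) j - min (j + n) j = n := by omega
  unfold Dexpr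
  rw [e2, e4, e1, e3]
  rcases Nat.even_or_odd n with hne | hno
  · have hn2 := Nat.even_iff.mp hne
    rw [G_even (by omega), G_even hn2, Nat.add_div_right _ hd0]
    push_cast; ring
  · have hn2 := Nat.odd_iff.mp hno
    rw [G_odd (by omega), G_odd hn2, Nat.add_div_right _ hd0,
      (show 2 * (n + d) = 2 * n + d + d by ring),
      Nat.add_div_right _ hd0, Nat.add_div_right _ hd0]
    push_cast; ring

-- case 1, t < 0 odd, -d < 2t  (u = j - i, 0 < 2u < d, u odd)
theorem c1_negodd (d i j : ℕ) (hd : 2 ≤ d) (h2 : d % 2 = 0) (h : i < j)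
    (hu : 2 * (j - i) < d) (huo : (j - i) % 2 = 1) : Dexpr d d i j = 2 * d := by
  have hd0 : 0 < d := by omega
  obtain ⟨u, hu0, hj⟩ : ∃ u, 0 < u ∧ j = i + u := ⟨j - i, by omega, by omega⟩
  subst hj
  have huu : i + u - i = u := by omega
  rw [huu] at hu huo
  have e1 : min (i + d) (i + u) = i + u := by omega
  have e2 : max (i + d) (i + u) - min (i + d) (i + u) = d - u := by omega
  have e3 : min i (i + u) = i := by omega
  have e4 : max i (i + u) - min i (i + u) = u := by omega
  unfold Dexpr
  rw [e2, e4, e1, e3, G_odd (n := d - u) (by omega), G_odd huo,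
    Nat.div_eq_of_lt (show d - u < d by omega),
    Nat.div_eq_of_lt (show u < d by omega),
    Nat.div_eq_of_lt (show 2 * u < d by omega),
    div_one' (show d ≤ 2 * (d - u) by omega) (by omega)]
  push_cast [Nat.cast_sub (show u ≤ d by omega)]
  ring

-- case 1, t < 0 even, -d < t < 0
theorem c1_negeven (d i j : ℕ) (hd : 2 ≤ d) (h2 : d % 2 = 0) (h : i < j)
    (hu : j - i < d) (hue : (j - i) % 2 = 0) : Dexpr d d i j = d := by
  have hd0 : 0 < d := by omega
  obtain ⟨u, hu0, hj⟩ : ∃ u, 0 < u ∧ j = i + u := ⟨j - i, by omega, by omega⟩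
  subst hj
  have huu : i + u - i = u := by omega
  rw [huu] at hu hue
  have e1 : min (i + d) (i + u) = i + u := by omega
  have e2 : max (i + d) (i + u) - min (i + d) (i + u) = d - u := by omega
  have e3 : min i (i + u) = i := by omega
  have e4 : max i (i + u) - min i (i + u) = u := by omega
  unfold Dexpr
  rw [e2, e4, e1, e3, G_even (n := d - u) (by omega), G_even hue,
    Nat.div_eq_of_lt (show d - u < d by omega),
    Nat.div_eq_of_lt (show u < d by omega)]
  push_cast [Nat.cast_sub (show u ≤ d by omega)]
  ring

-- case 1, t < -d
theorem c1_low (d i j : ℕ) (hd : 2 ≤ d) (h2 : d % 2 = 0) (h : i + d < j) :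
    Dexpr d d i j = 0 := by
  have hd0 : 0 < d := by omega
  obtain ⟨v, hv0, hj⟩ : ∃ v, 0 < v ∧ j = i + (v + d) := ⟨j - i - d, by omega, by omega⟩
  subst hj
  have e1 : min (i + d) (i + (v + d)) = i + d := by omega
  have e2 : max (i + d) (i + (v + d)) - min (i + d) (i + (v + d)) = v := by omega
  have e3 : min i (i + (v + d)) = i := by omega
  have e4 : max i (i + (v + d)) - min i (i + (v + d)) = v + d := by omega
  unfold Dexpr
  rw [e2, e4, e1, e3]
  rcases Nat.even_or_odd v with hne | hno
  · have hv2 := Nat.even_iff.mp hne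
    rw [G_even (n := v + d) (by omega), G_even hv2, Nat.add_div_right _ hd0]
    push_cast; ring
  · have hv2 := Nat.odd_iff.mp hno
    rw [G_odd (n := v + d) (by omega), G_odd hv2, Nat.add_div_right _ hd0,
      (show 2 * (v + d) = 2 * v + d + d by ring),
      Nat.add_div_right _ hd0, Nat.add_div_right _ hd0]
    push_cast; ring

-- case 1, t odd, -d < t, 2t < -d  (d/2 < u < d, u odd)
theorem c1_mid (d i j : ℕ) (hd : 2 ≤ d) (h2 : d % 2 = 0) (h : i < j)
    (hu1 : d < 2 * (j - i)) (hu2 : j - i < d) (huo : (j - i) % 2 = 1) :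
    Dexpr d d i j = 0 := by
  have hd0 : 0 < d := by omega
  obtain ⟨u, hu0, hj⟩ : ∃ u, 0 < u ∧ j = i + u := ⟨j - i, by omega, by omega⟩
  subst hj
  have huu : i + u - i = u := by omega
  rw [huu] at hu1 hu2 huo
  have e1 : min (i + d) (i + u) = i + u := by omega
  have e2 : max (i + d) (i + u) - min (i + d) (i + u) = d - u := by omega
  have e3 : min i (i + u) = i := by omega
  have e4 : max i (i + u) - min i (i + u) = u := by omega
  unfold Dexpr
  rw [e2, e4, e1, e3, G_odd (n := d - u) (by omega), G_odd huo,
    Nat.div_eq_of_lt (show d - u < d by omega),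
    Nat.div_eq_of_lt (show u < d by omega),
    Nat.div_eq_of_lt (show 2 * (d - u) < d by omega),
    div_one' (show d ≤ 2 * u by omega) (by omega)]
  push_cast [Nat.cast_sub (show u ≤ d by omega)]
  ring

-- case 2, t > 0
theorem c2_pos (d i j : ℕ) (hd : 2 ≤ d) (h : j < i) :
    Dexpr d (2 * d) i j = 4 * d := by
  have hd0 : 0 < d := by omega
  obtain ⟨n, hn0, hi⟩ : ∃ n, 0 < n ∧ i = j + n := ⟨i - j, by omega, by omega⟩
  subst hi
  have e1 : min (j + n + 2 * d) j = j := by omega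
  have e2 : max (j + n + 2 * d) j - min (j + n + 2 * d) j = n + d + d := by omega
  have e3 : min (j + n) j = j := by omega
  have e4 : max (j + n) j - min (j + n) j = n := by omega
  unfold Dexpr
  rw [e2, e4, e1, e3]
  rcases Nat.even_or_odd n with hne | hno
  · have hn2 := Nat.even_iff.mp hne
    rw [G_even (by omega), G_even hn2, Nat.add_div_right _ hd0, Nat.add_div_right _ hd0]
    push_cast; ring
  · have hn2 := Nat.odd_iff.mp hno
    rw [G_odd (by omega), G_odd hn2, Nat.add_div_right _ hd0, Nat.add_div_right _ hd0,
      (show 2 * (n + d + d) = 2 * n + d + d + d + d by ring),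
      Nat.add_div_right _ hd0, Nat.add_div_right _ hd0, Nat.add_div_right _ hd0,
      Nat.add_div_right _ hd0]
    push_cast; ring

-- case 2, t < 0 odd, 2|t| < d
theorem c2_negodd (d i j : ℕ) (hd : 2 ≤ d) (h : i < j)
    (hu : 2 * (j - i) < d) (huo : (j - i) % 2 = 1) : Dexpr d (2 * d) i j = 4 * d := by
  have hd0 : 0 < d := by omega
  obtain ⟨u, hu0, hj⟩ : ∃ u, 0 < u ∧ j = i + u := ⟨j - i, by omega, by omega⟩
  subst hj
  have huu : i + u - i = u := by omega
  rw [huu] at hu huo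
  have e1 : min (i + 2 * d) (i + u) = i + u := by omega
  have e2 : max (i + 2 * d) (i + u) - min (i + 2 * d) (i + u) = 2 * d - u := by omega
  have e3 : min i (i + u) = i := by omega
  have e4 : max i (i + u) - min i (i + u) = u := by omega
  unfold Dexpr
  rw [e2, e4, e1, e3, G_odd (n := 2 * d - u) (by omega), G_odd huo,
    div_one' (show d ≤ 2 * d - u by omega) (by omega),
    Nat.div_eq_of_lt (show u < d by omega),
    Nat.div_eq_of_lt (show 2 * u < d by omega),
    div_three' hd0 (show 3 * d ≤ 2 * (2 * d - u) by omega) (by omega)]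
  push_cast [Nat.cast_sub (show u ≤ 2 * d by omega)]
  ring

-- case 2, t < 0 even, |t| < d
theorem c2_negeven (d i j : ℕ) (hd : 2 ≤ d) (h : i < j)
    (hu : j - i < d) (hue : (j - i) % 2 = 0) : Dexpr d (2 * d) i j = 3 * d := by
  have hd0 : 0 < d := by omega
  obtain ⟨u, hu0, hj⟩ : ∃ u, 0 < u ∧ j = i + u := ⟨j - i, by omega, by omega⟩
  subst hj
  have huu : i + u - i = u := by omega
  rw [huu] at hu hue
  have e1 : min (i + 2 * d) (i + u) = i + u := by omega
  have e2 : max (i + 2 * d) (i + u) - min (i + 2 * d) (i + u) = 2 * d - u := by omega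
  have e3 : min i (i + u) = i := by omega
  have e4 : max i (i + u) - min i (i + u) = u := by omega
  unfold Dexpr
  rw [e2, e4, e1, e3, G_even (n := 2 * d - u) (by omega), G_even hue,
    div_one' (show d ≤ 2 * d - u by omega) (by omega),
    Nat.div_eq_of_lt (show u < d by omega)]
  push_cast [Nat.cast_sub (show u ≤ 2 * d by omega)]
  ring

-- helper for mid region of case 2
theorem G_mid {d w : ℕ} (hd : 0 < d) (hw : w % 2 = 1) (h1 : d < 2 * w) (h2 : 2 * w < 3 * d) :
    G d w = w + d := by
  rw [G_odd hw]
  rcases le_or_gt d w with h | h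
  · rw [div_one' h (by omega), div_two' hd (by omega) (by omega)]
    push_cast; ring
  · rw [Nat.div_eq_of_lt h, div_one' (by omega) (by omega)]
    push_cast; ring

-- case 2, t odd, -3d < 2t < -d
theorem c2_mid3 (d i j : ℕ) (hd : 2 ≤ d) (h : i < j)
    (hu1 : d < 2 * (j - i)) (hu2 : 2 * (j - i) < 3 * d) (huo : (j - i) % 2 = 1) :
    Dexpr d (2 * d) i j = 2 * d := by
  have hd0 : 0 < d := by omega
  obtain ⟨u, hu0, hj⟩ : ∃ u, 0 < u ∧ j = i + u := ⟨j - i, by omega, by omega⟩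
  subst hj
  have huu : i + u - i = u := by omega
  rw [huu] at hu1 hu2 huo
  have e1 : min (i + 2 * d) (i + u) = i + u := by omega
  have e2 : max (i + 2 * d) (i + u) - min (i + 2 * d) (i + u) = 2 * d - u := by omega
  have e3 : min i (i + u) = i := by omega
  have e4 : max i (i + u) - min i (i + u) = u := by omega
  unfold Dexpr
  rw [e2, e4, e1, e3, G_mid hd0 (by omega) (by omega) (by omega),
    G_mid hd0 huo hu1 hu2]
  push_cast [Nat.cast_sub (show u ≤ 2 * d by omega)]
  ring

-- case 2, t even, -2d < t < -d
theorem c2_mid4 (d i j : ℕ) (hd : 2 ≤ d) (h : i < j)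
    (hu1 : d < j - i) (hu2 : j - i < 2 * d) (hue : (j - i) % 2 = 0) :
    Dexpr d (2 * d) i j = d := by
  have hd0 : 0 < d := by omega
  obtain ⟨u, hu0, hj⟩ : ∃ u, 0 < u ∧ j = i + u := ⟨j - i, by omega, by omega⟩
  subst hj
  have huu : i + u - i = u := by omega
  rw [huu] at hu1 hu2 hue
  have e1 : min (i + 2 * d) (i + u) = i + u := by omega
  have e2 : max (i + 2 * d) (i + u) - min (i + 2 * d) (i + u) = 2 * d - u := by omega
  have e3 : min i (i + u) = i := by omega
  have e4 : max i (i + u) - min i (i + u) = u := by omega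
  unfold Dexpr
  rw [e2, e4, e1, e3, G_even (n := 2 * d - u) (by omega), G_even hue,
    Nat.div_eq_of_lt (show 2 * d - u < d by omega),
    div_one' (show d ≤ u by omega) hu2]
  push_cast [Nat.cast_sub (show u ≤ 2 * d by omega)]
  ring

-- case 2, t odd, -2d < t, 2t < -3d
theorem c2_mid5 (d i j : ℕ) (hd : 2 ≤ d) (h : i < j)
    (hu1 : 3 * d < 2 * (j - i)) (hu2 : j - i < 2 * d) (huo : (j - i) % 2 = 1) :
    Dexpr d (2 * d) i j = 0 := by
  have hd0 : 0 < d := by omega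
  obtain ⟨u, hu0, hj⟩ : ∃ u, 0 < u ∧ j = i + u := ⟨j - i, by omega, by omega⟩
  subst hj
  have huu : i + u - i = u := by omega
  rw [huu] at hu1 hu2 huo
  have e1 : min (i + 2 * d) (i + u) = i + u := by omega
  have e2 : max (i + 2 * d) (i + u) - min (i + 2 * d) (i + u) = 2 * d - u := by omega
  have e3 : min i (i + u) = i := by omega
  have e4 : max i (i + u) - min i (i + u) = u := by omega
  unfold Dexpr
  rw [e2, e4, e1, e3, G_odd (n := 2 * d - u) (by omega), G_odd huo,
    Nat.div_eq_of_lt (show 2 * d - u < d by omega),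
    Nat.div_eq_of_lt (show 2 * (2 * d - u) < d by omega),
    div_one' (show d ≤ u by omega) hu2,
    div_three' hd0 (show 3 * d ≤ 2 * u by omega) (by omega)]
  push_cast [Nat.cast_sub (show u ≤ 2 * d by omega)]
  ring

-- case 2, t < -2d
theorem c2_low (d i j : ℕ) (hd : 2 ≤ d) (h : i + 2 * d < j) :
    Dexpr d (2 * d) i j = 0 := by
  have hd0 : 0 < d := by omega
  obtain ⟨v, hv0, hj⟩ : ∃ v, 0 < v ∧ j = i + (v + 2 * d) := ⟨j - i - 2 * d, by omega, by omega⟩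
  subst hj
  have e1 : min (i + 2 * d) (i + (v + 2 * d)) = i + 2 * d := by omega
  have e2 : max (i + 2 * d) (i + (v + 2 * d)) - min (i + 2 * d) (i + (v + 2 * d)) = v := by
    omega
  have e3 : min i (i + (v + 2 * d)) = i := by omega
  have e4 : max i (i + (v + 2 * d)) - min i (i + (v + 2 * d)) = v + d + d := by omega
  unfold Dexpr
  rw [e2, e4, e1, e3]
  rcases Nat.even_or_odd v with hne | hno
  · have hv2 := Nat.even_iff.mp hne
    rw [G_even (n := v + d + d) (by omega), G_even hv2, Nat.add_div_right _ hd0,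
      Nat.add_div_right _ hd0]
    push_cast; ring
  · have hv2 := Nat.odd_iff.mp hno
    rw [G_odd (n := v + d + d) (by omega), G_odd hv2, Nat.add_div_right _ hd0,
      Nat.add_div_right _ hd0,
      (show 2 * (v + d + d) = 2 * v + d + d + d + d by ring),
      Nat.add_div_right _ hd0, Nat.add_div_right _ hd0, Nat.add_div_right _ hd0,
      Nat.add_div_right _ hd0]
    push_cast; ring

-- case 3, t > 0
theorem c3_pos (m i j : ℕ) (hm : 1 ≤ m) (hmo : m % 2 = 1) (h : j < i) :
    Dexpr (2 * m) m i j = 2 * m := by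
  have hd0 : 0 < 2 * m := by omega
  obtain ⟨n, hn0, hi⟩ : ∃ n, 0 < n ∧ i = j + n := ⟨i - j, by omega, by omega⟩
  subst hi
  have e1 : min (j + n + m) j = j := by omega
  have e2 : max (j + n + m) j - min (j + n + m) j = n + m := by omega
  have e3 : min (j + n) j = j := by omega
  have e4 : max (j + n) j - min (j + n) j = n := by omega
  unfold Dexpr
  rw [e2, e4, e1, e3]
  obtain ⟨q, s, hqs, hs⟩ : ∃ q s, n = 2 * m * q + s ∧ s < 2 * m :=
    ⟨n / (2 * m), n % (2 * m), (Nat.div_add_mod n (2 * m)).symm, Nat.mod_lt n hd0⟩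
  have hnq : n / (2 * m) = q + s / (2 * m) := by
    rw [hqs, Nat.mul_add_div hd0]
  have h2nq : 2 * n / (2 * m) = 2 * q + 2 * s / (2 * m) := by
    have hh : 2 * n = 2 * m * (2 * q) + 2 * s := by
      have : 2 * m * (2 * q) = 2 * (2 * m * q) := by ring
      omega
    rw [hh, Nat.mul_add_div hd0]
  have hnmq : (n + m) / (2 * m) = q + (s + m) / (2 * m) := by
    have hh : n + m = 2 * m * q + (s + m) := by omega
    rw [hh, Nat.mul_add_div hd0]
  have h2nmq : 2 * (n + m) / (2 * m) = 2 * q + 1 + 2 * s / (2 * m) := by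
    have hh : 2 * (n + m) = 2 * m * (2 * q + 1) + 2 * s := by
      have : 2 * m * (2 * q + 1) = 2 * (2 * m * q) + 2 * m := by ring
      omega
    rw [hh, Nat.mul_add_div hd0]
  have hdich : (s + m) / (2 * m) = 2 * s / (2 * m) := by
    rcases le_or_gt m s with hsm | hsm
    · rw [div_one' (by omega) (by omega), div_one' (by omega) (by omega)]
    · rw [Nat.div_eq_of_lt (by omega), Nat.div_eq_of_lt (by omega)]
  have hs0 : s / (2 * m) = 0 := Nat.div_eq_of_lt hs
  rw [hs0] at hnq
  rcases Nat.even_or_odd n with hne | hno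
  · have hn2 := Nat.even_iff.mp hne
    rw [G_odd (n := n + m) (by omega), G_even hn2, h2nmq, hnmq, hnq, hdich]
    push_cast; ring
  · have hn2 := Nat.odd_iff.mp hno
    rw [G_even (n := n + m) (by omega), G_odd hn2, hnmq, hnq, h2nq, hdich]
    push_cast; ring

-- case 3, t < 0 odd, u < m
theorem c3_negodd (m i j : ℕ) (hm : 1 ≤ m) (hmo : m % 2 = 1) (h : i < j)
    (hu : j - i < m) (huo : (j - i) % 2 = 1) : Dexpr (2 * m) m i j = 2 * m := by
  have hd0 : 0 < 2 * m := by omega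
  obtain ⟨u, hu0, hj⟩ : ∃ u, 0 < u ∧ j = i + u := ⟨j - i, by omega, by omega⟩
  subst hj
  have huu : i + u - i = u := by omega
  rw [huu] at hu huo
  have e1 : min (i + m) (i + u) = i + u := by omega
  have e2 : max (i + m) (i + u) - min (i + m) (i + u) = m - u := by omega
  have e3 : min i (i + u) = i := by omega
  have e4 : max i (i + u) - min i (i + u) = u := by omega
  unfold Dexpr
  rw [e2, e4, e1, e3, G_even (n := m - u) (by omega), G_odd huo,
    Nat.div_eq_of_lt (show m - u < 2 * m by omega),
    Nat.div_eq_of_lt (show u < 2 * m by omega),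
    Nat.div_eq_of_lt (show 2 * u < 2 * m by omega)]
  push_cast [Nat.cast_sub (show u ≤ m by omega)]
  ring

-- case 3, t < 0 even, 0 < u < m
theorem c3_negeven (m i j : ℕ) (hm : 1 ≤ m) (hmo : m % 2 = 1) (h : i < j)
    (hu : j - i < m) (hue : (j - i) % 2 = 0) : Dexpr (2 * m) m i j = 0 := by
  have hd0 : 0 < 2 * m := by omega
  obtain ⟨u, hu0, hj⟩ : ∃ u, 0 < u ∧ j = i + u := ⟨j - i, by omega, by omega⟩
  subst hj
  have huu : i + u - i = u := by omega
  rw [huu] at hu hue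
  have e1 : min (i + m) (i + u) = i + u := by omega
  have e2 : max (i + m) (i + u) - min (i + m) (i + u) = m - u := by omega
  have e3 : min i (i + u) = i := by omega
  have e4 : max i (i + u) - min i (i + u) = u := by omega
  unfold Dexpr
  rw [e2, e4, e1, e3, G_odd (n := m - u) (by omega), G_even hue,
    Nat.div_eq_of_lt (show m - u < 2 * m by omega),
    Nat.div_eq_of_lt (show 2 * (m - u) < 2 * m by omega),
    Nat.div_eq_of_lt (show u < 2 * m by omega)]
  push_cast [Nat.cast_sub (show u ≤ m by omega)]
  ring

-- case 3, u > m
theorem c3_low (m i j : ℕ) (hm : 1 ≤ m) (hmo : m % 2 = 1) (h : i + m < j) :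
    Dexpr (2 * m) m i j = 0 := by
  have hd0 : 0 < 2 * m := by omega
  obtain ⟨u, hum, hj⟩ : ∃ u, m < u ∧ j = i + u := ⟨j - i, by omega, by omega⟩
  subst hj
  have e1 : min (i + m) (i + u) = i + m := by omega
  have e2 : max (i + m) (i + u) - min (i + m) (i + u) = u - m := by omega
  have e3 : min i (i + u) = i := by omega
  have e4 : max i (i + u) - min i (i + u) = u := by omega
  unfold Dexpr
  rw [e2, e4, e1, e3]
  obtain ⟨q, s, hqs, hs⟩ : ∃ q s, u = 2 * m * q + s ∧ s < 2 * m :=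
    ⟨u / (2 * m), u % (2 * m), (Nat.div_add_mod u (2 * m)).symm, Nat.mod_lt u hd0⟩
  have hs0 : s / (2 * m) = 0 := Nat.div_eq_of_lt hs
  have huq : u / (2 * m) = q := by
    rw [hqs, Nat.mul_add_div hd0, hs0]
    try omega
  have h2uq : 2 * u / (2 * m) = 2 * q + 2 * s / (2 * m) := by
    have hh : 2 * u = 2 * m * (2 * q) + 2 * s := by
      have : 2 * m * (2 * q) = 2 * (2 * m * q) := by ring
      omega
    rw [hh, Nat.mul_add_div hd0]
  rcases le_or_gt m s with hsm | hsm
  · have humq : (u - m) / (2 * m) = q := by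
      have hh : u - m = 2 * m * q + (s - m) := by omega
      have hs1 : (s - m) / (2 * m) = 0 := Nat.div_eq_of_lt (by omega)
      rw [hh, Nat.mul_add_div hd0, hs1]
      try omega
    have h2umq : 2 * (u - m) / (2 * m) = 2 * q := by
      have hh : 2 * (u - m) = 2 * m * (2 * q) + (2 * s - 2 * m) := by
        have : 2 * m * (2 * q) = 2 * (2 * m * q) := by ring
        omega
      have hs1 : (2 * s - 2 * m) / (2 * m) = 0 := Nat.div_eq_of_lt (by omega)
      rw [hh, Nat.mul_add_div hd0, hs1]
      try omega
    have hs2 : 2 * s / (2 * m) = 1 := div_one' (by omega) (by omega)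
    rcases Nat.even_or_odd u with hne | hno
    · have hu2 := Nat.even_iff.mp hne
      rw [G_odd (n := u - m) (by omega), G_even hu2, h2umq, humq, huq]
      push_cast [Nat.cast_sub (show m ≤ u by omega)]
      ring
    · have hu2 := Nat.odd_iff.mp hno
      rw [G_even (n := u - m) (by omega), G_odd hu2, humq, huq, h2uq, hs2]
      push_cast [Nat.cast_sub (show m ≤ u by omega)]
      ring
  · have hq1 : 1 ≤ q := by
      rcases Nat.eq_zero_or_pos q with h0 | h1
      · exfalso; rw [h0, mul_zero, zero_add] at hqs; omega
      · exact h1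
    obtain ⟨p, hp⟩ : ∃ p, q = p + 1 := ⟨q - 1, by omega⟩
    subst hp
    have humq : (u - m) / (2 * m) = p := by
      have hh : u - m = 2 * m * p + (m + s) := by
        have : 2 * m * (p + 1) = 2 * m * p + 2 * m := by ring
        omega
      have hs1 : (m + s) / (2 * m) = 0 := Nat.div_eq_of_lt (by omega)
      rw [hh, Nat.mul_add_div hd0, hs1]
      try omega
    have h2umq : 2 * (u - m) / (2 * m) = 2 * p + 1 := by
      have hh : 2 * (u - m) = 2 * m * (2 * p + 1) + 2 * s := by
        have h5 : 2 * m * (2 * p + 1) = 2 * (2 * m * (p + 1)) - 2 * m := by ring_nf; omega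
        have h6 : 2 * m * (p + 1) = 2 * m * p + 2 * m := by ring
        omega
      have hs1 : 2 * s / (2 * m) = 0 := Nat.div_eq_of_lt (by omega)
      rw [hh, Nat.mul_add_div hd0, hs1]
      try omega
    have hs2 : 2 * s / (2 * m) = 0 := Nat.div_eq_of_lt (by omega)
    rcases Nat.even_or_odd u with hne | hno
    · have hu2 := Nat.even_iff.mp hne
      rw [G_odd (n := u - m) (by omega), G_even hu2, h2umq, humq, huq]
      push_cast [Nat.cast_sub (show m ≤ u by omega)]
      ring
    · have hu2 := Nat.odd_iff.mp hno
      rw [G_even (n := u - m) (by omega), G_odd hu2, humq, huq, h2uq, hs2]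
      push_cast [Nat.cast_sub (show m ≤ u by omega)]
      ring

/-- The values of `Δ(i,j) = B_d((−q)^{i+e} − (−q)^j) − B_d((−q)^i − (−q)^j)` in the three
cases `d ≡ 0 (mod 4)`, `d` odd, and `d ≡ 2 (mod 4)`. -/
theorem Bd_cohook_differences_unitary (d i j : ℕ) (hd : 2 ≤ d)
    (hij : i ≠ j) (hije : i + eOf d ≠ j) :
    (d % 4 = 0 →
      ((0 < (i : ℤ) - j ∨ (Odd ((i : ℤ) - j) ∧ -(d : ℤ) < 2 * ((i : ℤ) - j))) →
        DeltaU d i j = 2 * d) ∧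
      ((Even ((i : ℤ) - j) ∧ -(d : ℤ) < (i : ℤ) - j ∧ (i : ℤ) - j < 0) →
        DeltaU d i j = d) ∧
      (((i : ℤ) - j < -(d : ℤ) ∨ (Odd ((i : ℤ) - j) ∧ 2 * ((i : ℤ) - j) < -(d : ℤ))) →
        DeltaU d i j = 0)) ∧
    (d % 2 = 1 →
      ((0 < (i : ℤ) - j ∨ (Odd ((i : ℤ) - j) ∧ -(d : ℤ) < 2 * ((i : ℤ) - j))) →
        DeltaU d i j = 4 * d) ∧
      ((Even ((i : ℤ) - j) ∧ -(d : ℤ) < (i : ℤ) - j ∧ (i : ℤ) - j < 0) →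
        DeltaU d i j = 3 * d) ∧
      ((Odd ((i : ℤ) - j) ∧ -(3 * (d : ℤ)) < 2 * ((i : ℤ) - j) ∧
          2 * ((i : ℤ) - j) < -(d : ℤ)) →
        DeltaU d i j = 2 * d) ∧
      ((Even ((i : ℤ) - j) ∧ -(2 * (d : ℤ)) < (i : ℤ) - j ∧ (i : ℤ) - j < -(d : ℤ)) →
        DeltaU d i j = d) ∧
      (((i : ℤ) - j < -(2 * (d : ℤ)) ∨
          (Odd ((i : ℤ) - j) ∧ 2 * ((i : ℤ) - j) < -(3 * (d : ℤ)))) →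
        DeltaU d i j = 0)) ∧
    (d % 4 = 2 →
      ((0 < (i : ℤ) - j ∨ (Odd ((i : ℤ) - j) ∧ -(d : ℤ) < 2 * ((i : ℤ) - j))) →
        DeltaU d i j = d) ∧
      ((2 * ((i : ℤ) - j) < -(d : ℤ) ∨ (Even ((i : ℤ) - j) ∧ (i : ℤ) - j < 0)) →
        DeltaU d i j = 0)) := by
  have hIJ : (i : ℤ) ≠ (j : ℤ) := by exact_mod_cast fun h => hij (by exact_mod_cast h)
  refine ⟨?_, ?_, ?_⟩
  · -- d ≡ 0 (mod 4)
    intro h4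
    have he : eOf d = d := by unfold eOf; rw [if_pos h4]
    have hD : DeltaU d i j = Dexpr d d i j := by
      rw [DeltaU_eq d i j hd hij hije, he]
    have hije' : i + d ≠ j := by rw [he] at hije; exact hije
    have h2 : d % 2 = 0 := by omega
    refine ⟨?_, ?_, ?_⟩
    · rintro (hpos | ⟨hodd, hlt⟩)
      · rw [hD]; exact c1_pos d i j hd h2 (by omega)
      · have ho := Int.odd_iff.mp hodd
        rcases lt_trichotomy i j with hc | hc | hc
        · rw [hD]
          exact c1_negodd d i j hd h2 hc (by omega) (by omega)
        · exact absurd hc hij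
        · rw [hD]; exact c1_pos d i j hd h2 hc
    · rintro ⟨heven, hl1, hl2⟩
      have hev := Int.even_iff.mp heven
      rw [hD]
      exact c1_negeven d i j hd h2 (by omega) (by omega) (by omega)
    · rintro (hlow | ⟨hodd, hlt⟩)
      · rw [hD]; exact c1_low d i j hd h2 (by omega)
      · have ho := Int.odd_iff.mp hodd
        rcases lt_or_ge ((i : ℤ) - j) (-(d : ℤ)) with hc | hc
        · rw [hD]; exact c1_low d i j hd h2 (by omega)
        · rw [hD]
          exact c1_mid d i j hd h2 (by omega) (by omega) (by omega) (by omega)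
  · -- d odd
    intro h1
    have he : eOf d = 2 * d := by
      unfold eOf; rw [if_neg (by omega), if_pos h1]
    have hD : DeltaU d i j = Dexpr d (2 * d) i j := by
      rw [DeltaU_eq d i j hd hij hije, he]
    have hije' : i + 2 * d ≠ j := by rw [he] at hije; exact hije
    refine ⟨?_, ?_, ?_, ?_, ?_⟩
    · rintro (hpos | ⟨hodd, hlt⟩)
      · rw [hD]; exact c2_pos d i j hd (by omega)
      · have ho := Int.odd_iff.mp hodd
        rcases lt_trichotomy i j with hc | hc | hc
        · rw [hD]; exact c2_negodd d i j hd hc (by omega) (by omega)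
        · exact absurd hc hij
        · rw [hD]; exact c2_pos d i j hd hc
    · rintro ⟨heven, hl1, hl2⟩
      have hev := Int.even_iff.mp heven
      rw [hD]
      exact c2_negeven d i j hd (by omega) (by omega) (by omega)
    · rintro ⟨hodd, hl1, hl2⟩
      have ho := Int.odd_iff.mp hodd
      rw [hD]
      exact c2_mid3 d i j hd (by omega) (by omega) (by omega) (by omega)
    · rintro ⟨heven, hl1, hl2⟩
      have hev := Int.even_iff.mp heven
      rw [hD]
      exact c2_mid4 d i j hd (by omega) (by omega) (by omega) (by omega)
    · rintro (hlow | ⟨hodd, hlt⟩)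
      · rw [hD]; exact c2_low d i j hd (by omega)
      · have ho := Int.odd_iff.mp hodd
        rcases lt_or_ge ((i : ℤ) - j) (-(2 * (d : ℤ))) with hc | hc
        · rw [hD]; exact c2_low d i j hd (by omega)
        · rw [hD]
          exact c2_mid5 d i j hd (by omega) (by omega) (by omega) (by omega)
  · -- d ≡ 2 (mod 4)
    intro h42
    obtain ⟨m, rfl⟩ : ∃ m, d = 2 * m := ⟨d / 2, by omega⟩
    have hm : 1 ≤ m := by omega
    have hmo : m % 2 = 1 := by omega
    have he : eOf (2 * m) = m := by
      unfold eOf; rw [if_neg (by omega), if_neg (by omega)]; omega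
    have hD : DeltaU (2 * m) i j = Dexpr (2 * m) m i j := by
      rw [DeltaU_eq (2 * m) i j hd hij hije, he]
    have hije' : i + m ≠ j := by rw [he] at hije; exact hije
    constructor
    · rintro (hpos | ⟨hodd, hlt⟩)
      · rw [hD, c3_pos m i j hm hmo (by omega)]; push_cast; ring
      · have ho := Int.odd_iff.mp hodd
        rcases lt_trichotomy i j with hc | hc | hc
        · rw [hD, c3_negodd m i j hm hmo hc (by omega) (by omega)]; push_cast; ring
        · exact absurd hc hij
        · rw [hD, c3_pos m i j hm hmo hc]; push_cast; ring
    · rintro (hlow | ⟨heven, hneg⟩)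
      · rw [hD]; exact c3_low m i j hm hmo (by omega)
      · have hev := Int.even_iff.mp heven
        rcases lt_or_ge (j - i) m with hc | hc
        · rw [hD]; exact c3_negeven m i j hm hmo (by omega) (by omega) (by omega)
        · rw [hD]; exact c3_low m i j hm hmo (by omega)
end
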